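/- arXiv:2604.19126 — 8 statements merged into one kernel-verified Lean document; each statement's English description precedes it below -/
import Mathlib

section
/- If X ⊂ ℝ^m and Y ⊂ ℝ^n are diameter-Ramsey, then the Cartesian product X × Y ⊂ ℝ^{m+n} (with the Euclidean product metric) is diameter-Ramsey. -/
/-- A finite set `A ⊆ ℝ^m` is diameter-Ramsey. -/
def IsDiamRamsey {m : ℕ} (A : Set (EuclideanSpace ℝ (Fin m))) : Prop :=
  ∀ q : ℕ, 0 < q → ∃ (N : ℕ) (R : Set (EuclideanSpace ℝ (Fin N))), R.Finite ∧
    Metric.diam R = Metric.diam A ∧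
    ∀ χ : EuclideanSpace ℝ (Fin N) → Fin q, ∃ S : Set (EuclideanSpace ℝ (Fin N)),
      S ⊆ R ∧ (∀ x ∈ S, ∀ y ∈ S, χ x = χ y) ∧
      ∃ f : EuclideanSpace ℝ (Fin N) → EuclideanSpace ℝ (Fin m),
        f '' S = A ∧ ∀ x ∈ S, ∀ y ∈ S, dist (f x) (f y) = dist x y

namespace DRAux

open Metric Set

/-- Concatenate two Euclidean vectors. -/
def app {m n : ℕ} (a : EuclideanSpace ℝ (Fin m)) (b : EuclideanSpace ℝ (Fin n)) :
    EuclideanSpace ℝ (Fin (m + n)) := WithLp.toLp 2 (Fin.append a b)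

lemma app_castAdd {m n : ℕ} (a : EuclideanSpace ℝ (Fin m)) (b : EuclideanSpace ℝ (Fin n))
    (i : Fin m) : app a b (Fin.castAdd n i) = a i := Fin.append_left a b i

lemma app_natAdd {m n : ℕ} (a : EuclideanSpace ℝ (Fin m)) (b : EuclideanSpace ℝ (Fin n))
    (i : Fin n) : app a b (Fin.natAdd m i) = b i := Fin.append_right a b i

lemma left_app {m n : ℕ} (a : EuclideanSpace ℝ (Fin m)) (b : EuclideanSpace ℝ (Fin n)) :
    WithLp.toLp 2 (fun i => app a b (Fin.castAdd n i)) = a := by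
  ext i; exact app_castAdd a b i

lemma right_app {m n : ℕ} (a : EuclideanSpace ℝ (Fin m)) (b : EuclideanSpace ℝ (Fin n)) :
    WithLp.toLp 2 (fun i => app a b (Fin.natAdd m i)) = b := by
  ext i; exact app_natAdd a b i

lemma app_left_right {m n : ℕ} (z : EuclideanSpace ℝ (Fin (m + n))) :
    app (WithLp.toLp 2 (fun i => z (Fin.castAdd n i))) (WithLp.toLp 2 (fun i => z (Fin.natAdd m i))) = z := by
  ext i
  refine Fin.addCases (fun j => ?_) (fun j => ?_) i
  · exact app_castAdd _ _ j
  · exact app_natAdd _ _ j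

lemma dist_app {m n : ℕ} (a a' : EuclideanSpace ℝ (Fin m)) (b b' : EuclideanSpace ℝ (Fin n)) :
    dist (app a b) (app a' b') = Real.sqrt (dist a a' ^ 2 + dist b b' ^ 2) := by
  have h1 : dist a a' ^ 2 = ∑ i, dist (a i) (a' i) ^ 2 := by
    rw [EuclideanSpace.dist_eq, Real.sq_sqrt (by positivity)]
  have h2 : dist b b' ^ 2 = ∑ i, dist (b i) (b' i) ^ 2 := by
    rw [EuclideanSpace.dist_eq, Real.sq_sqrt (by positivity)]
  rw [EuclideanSpace.dist_eq, h1, h2]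
  congr 1
  rw [Fin.sum_univ_add]
  congr 1
  · exact Finset.sum_congr rfl fun i _ => by rw [app_castAdd, app_castAdd]
  · exact Finset.sum_congr rfl fun i _ => by rw [app_natAdd, app_natAdd]

/-- The "product" of two sets realized by concatenation. -/
def pset {m n : ℕ} (A : Set (EuclideanSpace ℝ (Fin m))) (B : Set (EuclideanSpace ℝ (Fin n))) :
    Set (EuclideanSpace ℝ (Fin (m + n))) :=
  (fun p : EuclideanSpace ℝ (Fin m) × EuclideanSpace ℝ (Fin n) => app p.1 p.2) '' (A ×ˢ B)

lemma pset_eq {m n : ℕ} (A : Set (EuclideanSpace ℝ (Fin m))) (B : Set (EuclideanSpace ℝ (Fin n))) :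
    pset A B = {z : EuclideanSpace ℝ (Fin (m + n)) |
      WithLp.toLp 2 (fun i => z (Fin.castAdd n i)) ∈ A ∧ WithLp.toLp 2 (fun i => z (Fin.natAdd m i)) ∈ B} := by
  ext z
  constructor
  · rintro ⟨⟨a, b⟩, ⟨ha, hb⟩, rfl⟩
    constructor
    · have : WithLp.toLp 2 (fun i => app a b (Fin.castAdd n i)) = a := by
        ext i; exact app_castAdd a b i
      simpa [this] using ha
    · have : WithLp.toLp 2 (fun i => app a b (Fin.natAdd m i)) = b := by
        ext i; exact app_natAdd a b i
      simpa [this] using hb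
  · rintro ⟨ha, hb⟩
    exact ⟨(WithLp.toLp 2 (fun i => z (Fin.castAdd n i)), WithLp.toLp 2 (fun i => z (Fin.natAdd m i))), ⟨ha, hb⟩,
      app_left_right z⟩

/-- A finite nonempty set attains its diameter. -/
lemma exists_dist_eq_diam {α : Type*} [PseudoMetricSpace α] {s : Set α} (hs : s.Finite)
    (hne : s.Nonempty) : ∃ x ∈ s, ∃ y ∈ s, dist x y = Metric.diam s := by
  classical
  have hfin : (hs.toFinset ×ˢ hs.toFinset).Nonempty := by
    obtain ⟨x, hx⟩ := hne
    exact ⟨(x, x), by simp [hs.mem_toFinset, hx]⟩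
  obtain ⟨p, hp, hmax⟩ := Finset.exists_max_image (hs.toFinset ×ˢ hs.toFinset)
    (fun p => dist p.1 p.2) hfin
  simp only [Finset.mem_product, hs.mem_toFinset] at hp
  refine ⟨p.1, hp.1, p.2, hp.2, le_antisymm (dist_le_diam_of_mem hs.isBounded hp.1 hp.2) ?_⟩
  refine Metric.diam_le_of_forall_dist_le dist_nonneg fun x hx y hy => ?_
  exact hmax (x, y) (by simp [hs.mem_toFinset, hx, hy])

lemma diam_pset {m n : ℕ} {A : Set (EuclideanSpace ℝ (Fin m))}
    {B : Set (EuclideanSpace ℝ (Fin n))} (hA : A.Finite) (hB : B.Finite)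
    (hAne : A.Nonempty) (hBne : B.Nonempty) :
    Metric.diam (pset A B) = Real.sqrt (Metric.diam A ^ 2 + Metric.diam B ^ 2) := by
  refine le_antisymm ?_ ?_
  · refine Metric.diam_le_of_forall_dist_le (Real.sqrt_nonneg _) ?_
    rintro _ ⟨⟨a, b⟩, ⟨ha, hb⟩, rfl⟩ _ ⟨⟨a', b'⟩, ⟨ha', hb'⟩, rfl⟩
    rw [dist_app]
    refine Real.sqrt_le_sqrt (add_le_add ?_ ?_)
    · exact pow_le_pow_left₀ dist_nonneg (dist_le_diam_of_mem hA.isBounded ha ha') 2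
    · exact pow_le_pow_left₀ dist_nonneg (dist_le_diam_of_mem hB.isBounded hb hb') 2
  · obtain ⟨x, hx, x', hx', hxd⟩ := exists_dist_eq_diam hA hAne
    obtain ⟨y, hy, y', hy', hyd⟩ := exists_dist_eq_diam hB hBne
    have hmem : app x y ∈ pset A B := ⟨(x, y), ⟨hx, hy⟩, rfl⟩
    have hmem' : app x' y' ∈ pset A B := ⟨(x', y'), ⟨hx', hy'⟩, rfl⟩
    have hbd : (pset A B).Finite := ((hA.prod hB).image _)
    calc Real.sqrt (Metric.diam A ^ 2 + Metric.diam B ^ 2)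
        = dist (app x y) (app x' y') := by rw [dist_app, hxd, hyd]
      _ ≤ Metric.diam (pset A B) := dist_le_diam_of_mem hbd.isBounded hmem hmem'

end DRAux

/-- The Cartesian product of two diameter-Ramsey sets, realized in
`ℝ^{m+n}` with the Euclidean product metric, is diameter-Ramsey. -/
theorem stmt2 {m n : ℕ} (X : Set (EuclideanSpace ℝ (Fin m))) (Y : Set (EuclideanSpace ℝ (Fin n)))
    (hX : X.Finite) (hY : Y.Finite)
    (hXR : IsDiamRamsey X) (hYR : IsDiamRamsey Y) :
    IsDiamRamsey {z : EuclideanSpace ℝ (Fin (m + n)) |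
        WithLp.toLp 2 (fun i => z (Fin.castAdd n i)) ∈ X ∧ WithLp.toLp 2 (fun i => z (Fin.natAdd m i)) ∈ Y} := by
  classical
  open DRAux in
  -- Handle the cases where X or Y is empty: the target set is empty.
  by_cases hXne : X.Nonempty
  swap
  · intro q hq
    have hempty : {z : EuclideanSpace ℝ (Fin (m + n)) |
        WithLp.toLp 2 (fun i => z (Fin.castAdd n i)) ∈ X ∧ WithLp.toLp 2 (fun i => z (Fin.natAdd m i)) ∈ Y} = ∅ := by
      rw [Set.not_nonempty_iff_eq_empty] at hXne
      ext z; simp [hXne]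
    refine ⟨m + n, ∅, Set.finite_empty, by rw [hempty], fun χ => ⟨∅, by simp, by simp,
      fun z => z, by simp [hempty], by simp⟩⟩
  by_cases hYne : Y.Nonempty
  swap
  · intro q hq
    have hempty : {z : EuclideanSpace ℝ (Fin (m + n)) |
        WithLp.toLp 2 (fun i => z (Fin.castAdd n i)) ∈ X ∧ WithLp.toLp 2 (fun i => z (Fin.natAdd m i)) ∈ Y} = ∅ := by
      rw [Set.not_nonempty_iff_eq_empty] at hYne
      ext z; simp [hYne]
    refine ⟨m + n, ∅, Set.finite_empty, by rw [hempty], fun χ => ⟨∅, by simp, by simp,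
      fun z => z, by simp [hempty], by simp⟩⟩
  -- Main case.
  intro q hq
  -- Get the Ramsey set for Y with q colors.
  obtain ⟨N₂, R₂, hR₂fin, hR₂diam, hR₂⟩ := hYR q hq
  -- Number of colors for X: colorings of R₂.
  set α := (↥hR₂fin.toFinset → Fin q) with hα
  haveI : Nonempty α := ⟨fun _ => ⟨0, hq⟩⟩
  have hq' : 0 < Fintype.card α := Fintype.card_pos
  obtain ⟨N₁, R₁, hR₁fin, hR₁diam, hR₁⟩ := hXR (Fintype.card α) hq'
  let e : α ≃ Fin (Fintype.card α) := Fintype.equivFin α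
  refine ⟨N₁ + N₂, pset R₁ R₂, (hR₁fin.prod hR₂fin).image _, ?_, ?_⟩
  · -- diameters agree
    -- R₁ is nonempty: apply the Ramsey property with a constant coloring.
    have hR₁ne : R₁.Nonempty := by
      obtain ⟨S, hSR, _, f, hfS, _⟩ := hR₁ fun _ => ⟨0, hq'⟩
      obtain ⟨x, hx⟩ := hXne
      rw [← hfS] at hx
      obtain ⟨z, hz, _⟩ := hx
      exact ⟨z, hSR hz⟩
    have hR₂ne : R₂.Nonempty := by
      obtain ⟨S, hSR, _, f, hfS, _⟩ := hR₂ fun _ => ⟨0, hq⟩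
      obtain ⟨y, hy⟩ := hYne
      rw [← hfS] at hy
      obtain ⟨z, hz, _⟩ := hy
      exact ⟨z, hSR hz⟩
    rw [diam_pset hR₁fin hR₂fin hR₁ne hR₂ne, ← pset_eq,
      diam_pset hX hY hXne hYne, hR₁diam, hR₂diam]
  · intro χ
    -- color R₁ by the pattern of χ on R₂
    have hS₁ := hR₁ fun a => e (fun b => χ (app a (b : EuclideanSpace ℝ (Fin N₂))))
    obtain ⟨S₁, hS₁R, hS₁mono, f₁, hf₁S, hf₁iso⟩ := hS₁
    -- S₁ is nonempty since X is.
    have hS₁ne : S₁.Nonempty := by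
      obtain ⟨x, hx⟩ := hXne
      rw [← hf₁S] at hx
      obtain ⟨z, hz, _⟩ := hx
      exact ⟨z, hz⟩
    obtain ⟨a₀, ha₀⟩ := hS₁ne
    -- the pattern is constant on S₁:
    have hpat : ∀ a ∈ S₁, ∀ b ∈ R₂, χ (app a b) = χ (app a₀ b) := by
      intro a ha b hb
      have := hS₁mono a ha a₀ ha₀
      have heq : (fun b : ↥hR₂fin.toFinset => χ (app a (b : EuclideanSpace ℝ (Fin N₂))))
          = fun b : ↥hR₂fin.toFinset => χ (app a₀ (b : EuclideanSpace ℝ (Fin N₂))) :=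
        e.injective this
      have hbmem : b ∈ hR₂fin.toFinset := hR₂fin.mem_toFinset.2 hb
      exact congrFun heq ⟨b, hbmem⟩
    -- color R₂ by χ at a₀
    obtain ⟨S₂, hS₂R, hS₂mono, f₂, hf₂S, hf₂iso⟩ := hR₂ fun b => χ (app a₀ b)
    -- the monochromatic product set
    refine ⟨pset S₁ S₂, ?_, ?_, ?_⟩
    · rintro _ ⟨⟨a, b⟩, ⟨ha, hb⟩, rfl⟩
      exact ⟨(a, b), ⟨hS₁R ha, hS₂R hb⟩, rfl⟩
    · rintro _ ⟨⟨a, b⟩, ⟨ha, hb⟩, rfl⟩ _ ⟨⟨a', b'⟩, ⟨ha', hb'⟩, rfl⟩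
      calc χ (app a b) = χ (app a₀ b) := hpat a ha b (hS₂R hb)
        _ = χ (app a₀ b') := hS₂mono b hb b' hb'
        _ = χ (app a' b') := (hpat a' ha' b' (hS₂R hb')).symm
    · -- the isometry onto X × Y
      refine ⟨fun z => app (f₁ (WithLp.toLp 2 (fun i => z (Fin.castAdd N₂ i)))) (f₂ (WithLp.toLp 2 (fun i => z (Fin.natAdd N₁ i)))),
        ?_, ?_⟩
      · ext z
        simp only [Set.mem_image, Set.mem_setOf_eq]
        constructor
        · rintro ⟨w, ⟨⟨a, b⟩, ⟨ha, hb⟩, rfl⟩, rfl⟩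
          simp only [left_app, right_app]
          exact ⟨(hf₁S ▸ ⟨a, ha, rfl⟩), (hf₂S ▸ ⟨b, hb, rfl⟩)⟩
        · rintro ⟨hzX, hzY⟩
          rw [← hf₁S] at hzX
          rw [← hf₂S] at hzY
          obtain ⟨a, ha, hfa⟩ := hzX
          obtain ⟨b, hb, hfb⟩ := hzY
          refine ⟨app a b, ⟨(a, b), ⟨ha, hb⟩, rfl⟩, ?_⟩
          simp only [left_app, right_app, hfa, hfb]
          exact app_left_right z
      · rintro _ ⟨⟨a, b⟩, ⟨ha, hb⟩, rfl⟩ _ ⟨⟨a', b'⟩, ⟨ha', hb'⟩, rfl⟩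
        simp only [left_app, right_app]
        rw [dist_app, dist_app, hf₁iso a ha a' ha', hf₂iso b hb b' hb']
end

section
/- Every regular simplex (a finite set of points with all pairwise distances equal) is diameter-Ramsey. -/
/-- Diameter of a finite equidistant set with at least two points. -/
lemma diam_eq_equi {E : Type*} [MetricSpace E] {s : Set E} (hs : s.Finite) {ℓ : ℝ}
    (h : ∀ x ∈ s, ∀ y ∈ s, x ≠ y → dist x y = ℓ) {x y : E} (hx : x ∈ s) (hy : y ∈ s)
    (hxy : x ≠ y) : Metric.diam s = ℓ := by
  have hl0 : 0 ≤ ℓ := (h x hx y hy hxy) ▸ dist_nonneg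
  refine le_antisymm (Metric.diam_le_of_forall_dist_le hl0 ?_) ?_
  · intro a ha b hb
    rcases eq_or_ne a b with rfl | hab
    · simpa using hl0
    · exact (h a ha b hb hab).le
  · calc ℓ = dist x y := (h x hx y hy hxy).symm
      _ ≤ _ := Metric.dist_le_diam_of_mem hs.isBounded hx hy

lemma dist_single_ne {n : ℕ} {i j : Fin n} (hij : i ≠ j) (c : ℝ) :
    dist (EuclideanSpace.single i c : EuclideanSpace ℝ (Fin n)) (EuclideanSpace.single j c)
      = Real.sqrt (2 * c ^ 2) := by
  rw [EuclideanSpace.dist_eq]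
  congr 1
  have key : ∀ k : Fin n,
      dist ((EuclideanSpace.single i c : EuclideanSpace ℝ (Fin n)) k)
        ((EuclideanSpace.single j c : EuclideanSpace ℝ (Fin n)) k) ^ 2
      = (if k = i then c ^ 2 else 0) + (if k = j then c ^ 2 else 0) := by
    intro k
    rcases eq_or_ne k i with rfl | hki <;> rcases eq_or_ne k j with rfl | hkj
    · exact absurd rfl hij
    · simp [EuclideanSpace.single_apply, hij, hkj, Real.dist_eq, abs_sq]
    · simp [EuclideanSpace.single_apply, hki, Ne.symm hij, Real.dist_eq, abs_sq, dist_comm]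
    · simp [EuclideanSpace.single_apply, hki, hkj]
  rw [Finset.sum_congr rfl fun k _ => key k, Finset.sum_add_distrib,
    Finset.sum_ite_eq' Finset.univ i, Finset.sum_ite_eq' Finset.univ j]
  simp; ring

/-- Every regular simplex (finite set with all pairwise distances equal)
is diameter-Ramsey. -/
theorem stmt3 {m : ℕ} (A : Set (EuclideanSpace ℝ (Fin m))) (hA : A.Finite) (ℓ : ℝ)
    (hreg : ∀ x ∈ A, ∀ y ∈ A, x ≠ y → dist x y = ℓ) :
    IsDiamRamsey A := by
  classical
  intro q hq
  set t := hA.toFinset.card with ht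
  rcases lt_or_ge t 2 with h2 | h2
  · -- A has at most one point
    rcases Set.eq_empty_or_nonempty A with hAe | ⟨a, ha⟩
    · refine ⟨0, ∅, Set.finite_empty, by simp [hAe], fun χ => ⟨∅, by simp, by simp,
        fun _ => 0, by simp [hAe], by simp⟩⟩
    · -- A is a singleton {a}
      have hsing : A = {a} := by
        ext z; constructor
        · intro hz
          by_contra hza
          have : 2 ≤ t := by
            rw [ht]
            exact Finset.one_lt_card.mpr ⟨z, by simpa using hz, a, by simpa using ha, hza⟩
          omega
        · rintro rfl; exact ha
      refine ⟨0, {0}, Set.finite_singleton 0, ?_, fun χ => ⟨{0}, le_refl _, ?_,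
        fun _ => a, by simp [hsing], ?_⟩⟩
      · simp [hsing]
      · intro x hx y hy
        simp only [Set.mem_singleton_iff] at hx hy; rw [hx, hy]
      · intro x hx y hy
        simp only [Set.mem_singleton_iff] at hx hy; subst hx; subst hy; simp
  · -- A has at least two points: ℓ > 0
    obtain ⟨a, ha, b, hb, hab⟩ := Finset.one_lt_card.mp h2
    rw [Set.Finite.mem_toFinset] at ha hb
    have hl : 0 < ℓ := by
      have := hreg a ha b hb hab
      rw [← this]; exact dist_pos.mpr hab
    have hdA : Metric.diam A = ℓ := diam_eq_equi hA hreg ha hb hab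
    set n := q * t with hn
    have hn2 : 2 ≤ n := le_trans h2 (Nat.le_mul_of_pos_left t hq)
    set c : ℝ := ℓ / Real.sqrt 2 with hc
    set p : Fin n → EuclideanSpace ℝ (Fin n) := fun i => EuclideanSpace.single i c with hp
    have hpd : ∀ i j : Fin n, i ≠ j → dist (p i) (p j) = ℓ := by
      intro i j hij
      rw [hp]
      simp only
      rw [dist_single_ne hij c, hc, div_pow, Real.sq_sqrt (by norm_num : (2:ℝ) ≥ 0)]
      rw [mul_div_cancel₀ _ (by norm_num : (2:ℝ) ≠ 0)]
      exact Real.sqrt_sq hl.le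
    have hpinj : Function.Injective p := by
      intro i j hij
      by_contra hne
      have := hpd i j hne
      rw [hij, dist_self] at this
      exact hl.ne this
    set R : Set (EuclideanSpace ℝ (Fin n)) := Set.range p with hR
    have hRequi : ∀ x ∈ R, ∀ y ∈ R, x ≠ y → dist x y = ℓ := by
      rintro x ⟨i, rfl⟩ y ⟨j, rfl⟩ hxy
      exact hpd i j fun h => hxy (by rw [h])
    have hdR : Metric.diam R = ℓ := by
      refine diam_eq_equi (Set.finite_range p) hRequi ⟨⟨0, by omega⟩, rfl⟩ ⟨⟨1, by omega⟩, rfl⟩ ?_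
      intro h
      have := hpinj h
      simp [Fin.ext_iff] at this
    refine ⟨n, R, Set.finite_range p, by rw [hdR, hdA], fun χ => ?_⟩
    -- pigeonhole
    obtain ⟨c0, hc0⟩ := Fintype.exists_lt_card_fiber_of_mul_lt_card (fun i => χ (p i))
      (by
        simp only [Fintype.card_fin]
        have h1 : q * (t - 1) < q * t := by
          have := hq
          have := h2
          nlinarith [Nat.sub_lt (by omega : 0 < t) (by omega : 0 < 1)]
        exact h1)
    obtain ⟨T, hTsub, hTcard⟩ := Finset.exists_subset_card_eq (by omega :
      t ≤ (Finset.univ.filter fun i => χ (p i) = c0).card)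
    set T' : Finset (EuclideanSpace ℝ (Fin n)) := T.image p with hT'
    have hT'card : T'.card = t := by
      rw [hT', Finset.card_image_of_injective _ hpinj, hTcard]
    have hmemA : ∀ x ∈ T', ∃ i ∈ T, p i = x := fun x hx => by
      simpa [hT'] using hx
    set e : {x // x ∈ T'} ≃ {x // x ∈ hA.toFinset} :=
      Finset.equivOfCardEq (by rw [hT'card]) with he
    set f : EuclideanSpace ℝ (Fin n) → EuclideanSpace ℝ (Fin m) :=
      fun x => if h : x ∈ T' then ((e ⟨x, h⟩ : hA.toFinset) : EuclideanSpace ℝ (Fin m)) else a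
      with hf
    have hfmem : ∀ x (h : x ∈ T'), f x ∈ A := by
      intro x h
      rw [hf]; simp only [dif_pos h]
      have := (e ⟨x, h⟩).2
      rwa [Set.Finite.mem_toFinset] at this
    have hfinj : ∀ x (hx : x ∈ T') y (hy : y ∈ T'), f x = f y → x = y := by
      intro x hx y hy hfxy
      rw [hf] at hfxy
      simp only [dif_pos hx, dif_pos hy] at hfxy
      have := e.injective (Subtype.ext hfxy)
      exact congrArg Subtype.val this
    refine ⟨↑T', ?_, ?_, f, ?_, ?_⟩
    · intro x hx
      obtain ⟨i, _, rfl⟩ := hmemA x hx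
      exact ⟨i, rfl⟩
    · intro x hx y hy
      obtain ⟨i, hi, rfl⟩ := hmemA x hx
      obtain ⟨j, hj, rfl⟩ := hmemA y hy
      have hi' := Finset.mem_filter.mp (hTsub hi)
      have hj' := Finset.mem_filter.mp (hTsub hj)
      rw [hi'.2, hj'.2]
    · ext z
      constructor
      · rintro ⟨x, hx, rfl⟩
        exact hfmem x hx
      · intro hz
        have hz' : z ∈ hA.toFinset := by rwa [Set.Finite.mem_toFinset]
        refine ⟨(e.symm ⟨z, hz'⟩ : T'), (e.symm ⟨z, hz'⟩).2, ?_⟩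
        rw [hf]
        simp only [dif_pos (e.symm ⟨z, hz'⟩).2]
        have : (⟨((e.symm ⟨z, hz'⟩ : T') : EuclideanSpace ℝ (Fin n)),
            (e.symm ⟨z, hz'⟩).2⟩ : {x // x ∈ T'}) = e.symm ⟨z, hz'⟩ := rfl
        rw [this, e.apply_symm_apply]
    · intro x hx y hy
      simp only [Finset.mem_coe] at hx hy
      rcases eq_or_ne x y with rfl | hxy
      · simp
      · have hfxy : f x ≠ f y := fun h => hxy (hfinj x hx y hy h)
        obtain ⟨i, _, rfl⟩ := hmemA x hx
        obtain ⟨j, _, rfl⟩ := hmemA y hy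
        rw [hreg _ (hfmem _ hx) _ (hfmem _ hy) hfxy,
          hpd i j fun h => hxy (by rw [h])]
end

section
/- Let A = {p_1, …, p_n} be a simplex with diameter D, ‖p_1 − p_2‖ = D, and let 𝓑 be the family of subsets B ⊆ [n] with |B| ≥ 2 and {1,2} ⊄ B. Suppose there are nonnegative reals α_B (B ∈ 𝓑) such that D² − ‖p_i − p_j‖² = Σ_{B ∈ 𝓑, {i,j} ⊆ B} α_B for all 1 ≤ i < j ≤ n, and Σ_{B ∈ 𝓑} α_B ≤ D². Then A is diameter-Ramsey. -/
/-!
Put the slack `D² - ∑ α_B` on the empty block, so that the weights `c_B` sum to `D²` and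
`‖p_i - p_j‖²` is the total weight of the blocks `B` that do not contain both `i` and `j`.
Collapsing a block `B` to a point gives a map `ρ_B : V → V ⊔ {∗}` on the vertex set; a word
`w ∈ V^ι` is sent to the family `(ρ_B ∘ w)_B`, and such families are embedded in Euclidean space
so that squared distances become `c`-weighted Hamming distances. The image has diameter `√(∑ c_B) = D`. By
Hales–Jewett, every colouring of it has a monochromatic combinatorial line, and the images of the
points of a line realise exactly the squared distances `‖p_i - p_j‖²`.
-/

open Finset

universe u

theorem isDiamRamsey_of_fintype_coordinates {m : ℕ} {A : Set (EuclideanSpace ℝ (Fin m))}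
    (h : ∀ q : ℕ, 0 < q → ∃ (J : Type u) (_ : Fintype J) (R : Set (EuclideanSpace ℝ J)),
      R.Finite ∧ Metric.diam R = Metric.diam A ∧
      ∀ χ : EuclideanSpace ℝ J → Fin q, ∃ S ⊆ R, (∀ x ∈ S, ∀ y ∈ S, χ x = χ y) ∧
        ∃ f : EuclideanSpace ℝ J → EuclideanSpace ℝ (Fin m),
          f '' S = A ∧ ∀ x ∈ S, ∀ y ∈ S, dist (f x) (f y) = dist x y) :
    IsDiamRamsey A := by
  intro q hq
  obtain ⟨J, _, R, hfin, hdiam, hcol⟩ := h q hq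
  let T := LinearIsometryEquiv.piLpCongrLeft 2 ℝ ℝ (Fintype.equivFin J)
  refine ⟨Fintype.card J, T '' R, hfin.image _, by rw [T.diam_image, hdiam], fun χ => ?_⟩
  obtain ⟨S, hSR, hmono, f, hfS, hf⟩ := hcol (χ ∘ T)
  refine ⟨T '' S, Set.image_mono hSR, ?_, f ∘ T.symm, ?_, ?_⟩
  · rintro _ ⟨x, hx, rfl⟩ _ ⟨y, hy, rfl⟩
    exact hmono x hx y hy
  · simp only [Set.image_image, Function.comp_apply, LinearIsometryEquiv.symm_apply_apply, hfS]
  · rintro _ ⟨x, hx, rfl⟩ _ ⟨y, hy, rfl⟩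
    simpa using hf x hx y hy

theorem exists_image_range_eq_of_dist_eq {V E F : Type*} [Nonempty V] [PseudoMetricSpace E]
    [MetricSpace F] (X : V → E) (p : V → F) (h : ∀ i j, dist (X i) (X j) = dist (p i) (p j)) :
    ∃ f : E → F, f '' Set.range X = Set.range p ∧
      ∀ x ∈ Set.range X, ∀ y ∈ Set.range X, dist (f x) (f y) = dist x y := by
  have hf : ∀ i, p (Function.invFun X (X i)) = p i := fun i => by
    rw [← dist_eq_zero, ← h, Function.invFun_eq (f := X) ⟨i, rfl⟩, dist_self]
  refine ⟨p ∘ Function.invFun X, ?_, ?_⟩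
  · rw [← Set.range_comp]
    exact congrArg Set.range (funext hf)
  · rintro _ ⟨i, rfl⟩ _ ⟨j, rfl⟩
    simp only [Function.comp_apply, hf, h]

theorem Combinatorics.Line.comp_apply_eq_comp_apply_iff {α β ι : Type*}
    (l : Combinatorics.Line α ι) (f : α → β) {x y : α} : f ∘ l x = f ∘ l y ↔ f x = f y := by
  obtain ⟨k, hk⟩ := l.proper
  refine ⟨fun h => ?_, fun h => funext fun i => ?_⟩
  · simpa only [Function.comp_apply, l.apply_none _ _ hk] using congrFun h k
  · cases hi : l.idxFun i <;> simp [hi, h]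

section WeightedHamming

variable {K Y : Type*} [Fintype K] [Fintype Y] [DecidableEq Y]

theorem sum_sq_ite_sub_ite (a : ℝ) (x x' : Y) :
    ∑ y, ((if x = y then a else 0) - (if x' = y then a else 0)) ^ 2
      = if x = x' then 0 else 2 * a ^ 2 := by
  split_ifs with h
  · simp [h]
  · simp only [sub_sq, sum_add_distrib, sum_sub_distrib, ite_pow, ite_mul, mul_ite, mul_zero,
      zero_mul]
    simp [h]
    ring

noncomputable def weightedHammingEmbedding (c : K → ℝ) (x : K → Y) : EuclideanSpace ℝ (K × Y) :=
  WithLp.toLp 2 fun ky => if x ky.1 = ky.2 then √(c ky.1 / 2) else 0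

variable {c : K → ℝ}

theorem sq_dist_weightedHammingEmbedding (hc : ∀ k, 0 ≤ c k) (x x' : K → Y) :
    dist (weightedHammingEmbedding c x) (weightedHammingEmbedding c x') ^ 2
      = ∑ k, if x k = x' k then 0 else c k := by
  rw [EuclideanSpace.dist_eq, Real.sq_sqrt (by positivity), Fintype.sum_prod_type]
  refine sum_congr rfl fun k _ => ?_
  simp only [weightedHammingEmbedding, Real.dist_eq, sq_abs]
  rw [sum_sq_ite_sub_ite, Real.sq_sqrt (by linarith [hc k])]
  split_ifs <;> ring

theorem diam_range_weightedHammingEmbedding [Nontrivial Y] (hc : ∀ k, 0 ≤ c k) :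
    Metric.diam (Set.range (weightedHammingEmbedding (Y := Y) c)) = √(∑ k, c k) := by
  have hle : ∀ x x' : K → Y,
      dist (weightedHammingEmbedding c x) (weightedHammingEmbedding c x') ^ 2 ≤ ∑ k, c k :=
    fun x x' => by
      rw [sq_dist_weightedHammingEmbedding hc]
      exact sum_le_sum fun k _ => by split_ifs <;> simp [hc k]
  refine le_antisymm (Metric.diam_le_of_forall_dist_le (Real.sqrt_nonneg _) ?_) ?_
  · rintro _ ⟨x, rfl⟩ _ ⟨x', rfl⟩
    exact (Real.le_sqrt dist_nonneg (sum_nonneg fun k _ => hc k)).2 (hle x x')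
  · obtain ⟨y, y', hyy'⟩ := exists_pair_ne Y
    have hfar : dist (weightedHammingEmbedding c fun _ : K => y)
        (weightedHammingEmbedding c fun _ => y') = √(∑ k, c k) := by
      rw [← Real.sqrt_sq dist_nonneg, sq_dist_weightedHammingEmbedding hc]
      simp [hyy']
    rw [← hfar]
    exact Metric.dist_le_diam_of_mem (Set.finite_range _).isBounded ⟨_, rfl⟩ ⟨_, rfl⟩

end WeightedHamming

def collapse {V : Type*} [DecidableEq V] (B : Finset V) (i : V) : Option V :=
  if i ∈ B then none else some i

theorem collapse_eq_collapse_iff {V : Type*} [DecidableEq V] {B : Finset V} {i j : V}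
    (hij : i ≠ j) : collapse B i = collapse B j ↔ i ∈ B ∧ j ∈ B := by
  unfold collapse
  split_ifs <;> simp_all

theorem isDiamRamsey_of_sq_dist_eq_sum_separating {V : Type u} [Fintype V] [DecidableEq V]
    [Nonempty V] {N : ℕ} (p : V → EuclideanSpace ℝ (Fin N)) (c : Finset V → ℝ)
    (hc : ∀ B, 0 ≤ c B) (hdiam : Metric.diam (Set.range p) = √(∑ B, c B))
    (hdist : ∀ i j, i ≠ j → dist (p i) (p j) ^ 2 = ∑ B, if i ∈ B ∧ j ∈ B then 0 else c B) :
    IsDiamRamsey (Set.range p) := by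
  classical
  refine isDiamRamsey_of_fintype_coordinates fun q hq => ?_
  obtain ⟨ι, _, hHJ⟩ := Combinatorics.Line.exists_mono_in_high_dimension V (Fin q)
  have : Nonempty ι := by
    obtain ⟨l, -⟩ := hHJ fun _ => ⟨0, hq⟩
    exact l.proper.nonempty
  let e := weightedHammingEmbedding (Y := ι → Option V) c
  let word : (ι → V) → Finset V → ι → Option V := fun w B => collapse B ∘ w
  refine ⟨_, inferInstance, Set.range e, Set.finite_range _, ?_, fun χ => ?_⟩
  · rw [diam_range_weightedHammingEmbedding hc, hdiam]
  obtain ⟨l, col, hl⟩ := hHJ (χ ∘ e ∘ word)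
  have hline : ∀ i j, dist (e (word (l i))) (e (word (l j))) = dist (p i) (p j) := by
    intro i j
    rcases eq_or_ne i j with rfl | hij
    · simp
    rw [← pow_left_inj₀ dist_nonneg dist_nonneg two_ne_zero, hdist i j hij,
      sq_dist_weightedHammingEmbedding hc]
    refine sum_congr rfl fun B _ => ?_
    simp only [word, l.comp_apply_eq_comp_apply_iff, collapse_eq_collapse_iff hij]
  obtain ⟨f, hfS, hf⟩ := exists_image_range_eq_of_dist_eq (fun i => e (word (l i))) p hline
  refine ⟨_, ?_, ?_, f, hfS, hf⟩
  · rintro _ ⟨i, rfl⟩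
    exact ⟨_, rfl⟩
  · rintro _ ⟨i, rfl⟩ _ ⟨j, rfl⟩
    exact (hl i).trans (hl j).symm

theorem stmt4_general {n N : ℕ} (p : Fin (n + 2) → EuclideanSpace ℝ (Fin N))
    (D : ℝ) (hD : D = Metric.diam (Set.range p))
    (α : Finset (Fin (n + 2)) → ℝ)
    (hα : ∀ B, 0 ≤ α B)
    (hdec : ∀ i j : Fin (n + 2), i ≠ j →
      D ^ 2 - dist (p i) (p j) ^ 2
        = ∑ B ∈ Finset.univ.filter (fun B : Finset (Fin (n + 2)) => i ∈ B ∧ j ∈ B), α B)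
    (hmass : ∑ B : Finset (Fin (n + 2)), α B ≤ D ^ 2) :
    IsDiamRamsey (Set.range p) := by
  let c : Finset (Fin (n + 2)) → ℝ := fun B => α B + if B = ∅ then D ^ 2 - ∑ B, α B else 0
  have hc : ∀ B, 0 ≤ c B := fun B => add_nonneg (hα B) (by split_ifs <;> linarith)
  have hsum : ∑ B, c B = D ^ 2 := by simp [c, sum_add_distrib]
  refine isDiamRamsey_of_sq_dist_eq_sum_separating p c hc ?_ fun i j hij => ?_
  · rw [hsum, Real.sqrt_sq (hD ▸ Metric.diam_nonneg), hD]
  · have hcα : ∑ B ∈ univ.filter (fun B => i ∈ B ∧ j ∈ B), c B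
        = ∑ B ∈ univ.filter (fun B => i ∈ B ∧ j ∈ B), α B :=
      sum_congr rfl fun B hB => by simp [c, Finset.ne_empty_of_mem (mem_filter.1 hB).2.1]
    have hsplit := sum_filter_not_add_sum_filter univ (fun B => i ∈ B ∧ j ∈ B) c
    rw [sum_ite, sum_const_zero, zero_add]
    linarith [hdec i j hij]

/-- the higher-order deficit criterion. Vertices are indexed by
`Fin (n+2)` (so there are at least two), vertex `0` plays the role of `p₁` and
vertex `1` that of `p₂`; `𝓑` is the family of subsets of cardinality at least 2
not containing `{0,1}`. -/
theorem stmt4 {n N : ℕ} (p : Fin (n + 2) → EuclideanSpace ℝ (Fin N))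
    (hind : AffineIndependent ℝ p)
    (D : ℝ) (hD : D = Metric.diam (Set.range p))
    (hD12 : dist (p 0) (p 1) = D)
    (α : Finset (Fin (n + 2)) → ℝ)
    (hα : ∀ B, 0 ≤ α B)
    (hsupp : ∀ B, ¬(2 ≤ B.card ∧ ¬ ({0, 1} : Finset (Fin (n + 2))) ⊆ B) → α B = 0)
    (hdec : ∀ i j : Fin (n + 2), i ≠ j →
      D ^ 2 - dist (p i) (p j) ^ 2
        = ∑ B ∈ Finset.univ.filter (fun B : Finset (Fin (n + 2)) => i ∈ B ∧ j ∈ B), α B)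
    (hmass : ∑ B : Finset (Fin (n + 2)), α B ≤ D ^ 2) :
    IsDiamRamsey (Set.range p) :=
  stmt4_general p D hD α hα hdec hmass
end

section
/- In the setting of the higher-order deficit criterion, the constructed points q_i in the product ℝ-space satisfy: for all 1 ≤ i < j ≤ n, ‖q_i − q_j‖² = α_0 + Σ_{B ∈ 𝓑, {i,j} ⊄ B} α_B = D² − Σ_{B ∈ 𝓑, {i,j} ⊆ B} α_B, where α_0 = D² − Σ_B α_B. In particular ‖q_1 − q_2‖² = D². -/
/-- in the product construction of the higher-order deficit criterion,
the points `q i` satisfy the stated squared-distance identities. The factor `S₀` is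
indexed by the coordinate `∅`, and for each `B ∈ 𝓑` the factor `S_B` is the
coordinate `B`; the remaining coordinates are constant. -/
theorem stmt5 {n M : ℕ} (D : ℝ) (hD : 0 < D)
    (α : Finset (Fin (n + 2)) → ℝ)
    (hα : ∀ B, 0 ≤ α B)
    (hsupp : ∀ B, ¬(2 ≤ B.card ∧ ¬ ({0, 1} : Finset (Fin (n + 2))) ⊆ B) → α B = 0)
    (hmass : ∑ B : Finset (Fin (n + 2)), α B ≤ D ^ 2)
    (q : Fin (n + 2) → PiLp 2 (fun _ : Finset (Fin (n + 2)) => EuclideanSpace ℝ (Fin M)))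
    (h0 : ∀ i j, i ≠ j →
      dist (q i ∅) (q j ∅) ^ 2 = D ^ 2 - ∑ B : Finset (Fin (n + 2)), α B)
    (hB : ∀ B : Finset (Fin (n + 2)),
      (2 ≤ B.card ∧ ¬ ({0, 1} : Finset (Fin (n + 2))) ⊆ B) →
      ∀ i j, i ≠ j →
        dist (q i B) (q j B) ^ 2 = if i ∈ B ∧ j ∈ B then 0 else α B)
    (hconst : ∀ B : Finset (Fin (n + 2)),
      ¬(2 ≤ B.card ∧ ¬ ({0, 1} : Finset (Fin (n + 2))) ⊆ B) → B ≠ ∅ →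
      ∀ i j, q i B = q j B) :
    (∀ i j : Fin (n + 2), i ≠ j →
      dist (q i) (q j) ^ 2
        = (D ^ 2 - ∑ B : Finset (Fin (n + 2)), α B)
          + ∑ B ∈ Finset.univ.filter (fun B : Finset (Fin (n + 2)) =>
              (2 ≤ B.card ∧ ¬ ({0, 1} : Finset (Fin (n + 2))) ⊆ B) ∧ ¬(i ∈ B ∧ j ∈ B)), α B ∧
      dist (q i) (q j) ^ 2
        = D ^ 2 - ∑ B ∈ Finset.univ.filter
            (fun B : Finset (Fin (n + 2)) => i ∈ B ∧ j ∈ B), α B) ∧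
    dist (q 0) (q 1) ^ 2 = D ^ 2 := by
  have hdist : ∀ x y : PiLp 2 (fun _ : Finset (Fin (n + 2)) => EuclideanSpace ℝ (Fin M)),
      dist x y ^ 2 = ∑ B, dist (x B) (y B) ^ 2 := by
    intro x y
    rw [PiLp.dist_eq_sum (by norm_num), ← Real.rpow_natCast _ 2,
      ← Real.rpow_mul (by positivity)]
    norm_num
  -- the main computation
  have key : ∀ i j : Fin (n + 2), i ≠ j →
      dist (q i) (q j) ^ 2
        = (D ^ 2 - ∑ B : Finset (Fin (n + 2)), α B)
          + ∑ B ∈ Finset.univ.filter (fun B : Finset (Fin (n + 2)) =>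
              (2 ≤ B.card ∧ ¬ ({0, 1} : Finset (Fin (n + 2))) ⊆ B) ∧ ¬(i ∈ B ∧ j ∈ B)), α B := by
    intro i j hij
    rw [hdist]
    rw [← Finset.add_sum_erase _ _ (Finset.mem_univ (∅ : Finset (Fin (n + 2))))]
    rw [h0 i j hij]
    congr 1
    rw [Finset.sum_filter]
    rw [← Finset.add_sum_erase (f := fun B =>
      if (2 ≤ B.card ∧ ¬ ({0, 1} : Finset (Fin (n + 2))) ⊆ B) ∧ ¬(i ∈ B ∧ j ∈ B) then α B else 0)
      _ (Finset.mem_univ (∅ : Finset (Fin (n + 2))))]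
    rw [if_neg (by simp)]
    rw [zero_add]
    apply Finset.sum_congr rfl
    intro B hBmem
    have hBne : B ≠ ∅ := (Finset.mem_erase.1 hBmem).1
    by_cases hs : 2 ≤ B.card ∧ ¬ ({0, 1} : Finset (Fin (n + 2))) ⊆ B
    · rw [hB B hs i j hij]
      by_cases hin : i ∈ B ∧ j ∈ B
      · rw [if_pos hin, if_neg (by tauto)]
      · rw [if_neg hin, if_pos ⟨hs, hin⟩]
    · rw [hconst B hs hBne i j, if_neg (by tauto)]
      simp
  have hfil : ∀ i j : Fin (n + 2),
      ∑ B ∈ Finset.univ.filter (fun B : Finset (Fin (n + 2)) =>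
          (2 ≤ B.card ∧ ¬ ({0, 1} : Finset (Fin (n + 2))) ⊆ B) ∧ ¬(i ∈ B ∧ j ∈ B)), α B
        = (∑ B : Finset (Fin (n + 2)), α B)
          - ∑ B ∈ Finset.univ.filter
              (fun B : Finset (Fin (n + 2)) => i ∈ B ∧ j ∈ B), α B := by
    intro i j
    have h1 : ∑ B ∈ Finset.univ.filter (fun B : Finset (Fin (n + 2)) =>
          (2 ≤ B.card ∧ ¬ ({0, 1} : Finset (Fin (n + 2))) ⊆ B) ∧ ¬(i ∈ B ∧ j ∈ B)), α B
        = ∑ B ∈ Finset.univ.filter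
            (fun B : Finset (Fin (n + 2)) => ¬(i ∈ B ∧ j ∈ B)), α B := by
      apply Finset.sum_subset
      · intro B hBmem
        simp only [Finset.mem_filter, Finset.mem_univ, true_and] at hBmem ⊢
        exact hBmem.2
      · intro B _ hBmem
        simp only [Finset.mem_filter, Finset.mem_univ, true_and, not_and] at hBmem ⊢
        by_cases hin : i ∈ B ∧ j ∈ B
        · simp only [Finset.mem_filter, Finset.mem_univ, true_and] at *
          tauto
      
        · exact hsupp B (by tauto)
    rw [h1, eq_sub_iff_add_eq]
    exact Finset.sum_filter_not_add_sum_filter _ _ _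
  refine ⟨fun i j hij => ⟨key i j hij, ?_⟩, ?_⟩
  · rw [key i j hij, hfil i j]; ring
  · have h01 : (0 : Fin (n + 2)) ≠ 1 := by simp [Fin.ext_iff]
    rw [key 0 1 h01, hfil 0 1]
    have : ∑ B ∈ Finset.univ.filter
        (fun B : Finset (Fin (n + 2)) => (0 : Fin (n + 2)) ∈ B ∧ (1 : Fin (n + 2)) ∈ B),
        α B = 0 := by
      apply Finset.sum_eq_zero
      intro B hBmem
      simp only [Finset.mem_filter, Finset.mem_univ, true_and] at hBmem
      apply hsupp
      rintro ⟨-, hnot⟩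
      exact hnot (Finset.insert_subset hBmem.1 (Finset.singleton_subset_iff.2 hBmem.2))
    rw [this]; ring
end

section
/- For every d ≥ 3 and s, t, u > 0, there exist d+1 points p_1, …, p_{d+1} in some Euclidean space with squared distances ‖p_1 − p_2‖² = ‖p_1 − p_j‖² = s + t + u for 4 ≤ j ≤ d+1, ‖p_1 − p_3‖² = s + u, and ‖p_i − p_j‖² = s + t for 2 ≤ i < j ≤ d+1, and these points are affinely independent (form a d-simplex). -/
/-!
Put the vertices `p i = c eᵢ` (`i ≠ 0`) on the coordinate axes, with `2c² = s + t`: they form a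
regular simplex of squared edge `s + t` spanning the hyperplane `x₀ = 0`. The remaining vertex is
the apex `p 0 = y e₀ + x e₂`; its squared distance to `c eⱼ` is `x² + y² + c² - 2cx[j = 2]`, so
`2cx = t` and `x² + y² + c² = s + t + u` give the required distances. These can be solved with
`y ≠ 0` because `x² = t² / (2(s + t)) < (s + t) / 2`, and `y ≠ 0` puts the apex off the
hyperplane, which makes the vertices linearly, hence affinely, independent.
-/

open EuclideanSpace

section

variable {ι : Type*} [DecidableEq ι]

variable [Fintype ι] in
lemma EuclideanSpace.dist_single_sq (v : EuclideanSpace ℝ ι) (j : ι) (c : ℝ) :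
    dist v (single j c) ^ 2 = ‖v‖ ^ 2 - 2 * c * v j + c ^ 2 := by
  rw [dist_eq_norm, norm_sub_sq_real, inner_single_right, PiLp.norm_single]
  simp only [conj_trivial, Real.norm_eq_abs, sq_abs]
  ring

variable [Fintype ι] in
lemma EuclideanSpace.norm_single_add_single_sq {i j : ι} (h : i ≠ j) (a b : ℝ) :
    ‖single i a + single j b‖ ^ 2 = a ^ 2 + b ^ 2 := by
  rw [norm_add_sq_real, inner_single_left]
  simp [h.symm]

variable [Fintype ι] in
lemma EuclideanSpace.linearIndependent_of_eq_single_of_ne {𝕜 : Type*} [RCLike 𝕜]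
    {v : ι → EuclideanSpace 𝕜 ι} {i₀ : ι} {c : 𝕜} (hc : c ≠ 0)
    (hv : ∀ i, i ≠ i₀ → v i = single i c) (hv₀ : v i₀ i₀ ≠ 0) : LinearIndependent 𝕜 v := by
  rw [Fintype.linearIndependent_iff]
  intro g hg
  have coord (k : ι) : ∑ i, g i * v i k = 0 := by
    simpa using congrArg (· k) hg
  have hg₀ : g i₀ = 0 := by
    have := coord i₀
    rw [Finset.sum_eq_single i₀ (fun i _ hi => by simp [hv i hi, Ne.symm hi]) (by simp)] at this
    exact (mul_eq_zero.mp this).resolve_right hv₀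
  intro k
  by_cases hk : k = i₀
  · rwa [hk]
  have := coord k
  rw [Finset.sum_eq_single k (fun i _ hi => ?_) (by simp), hv k hk] at this
  · simpa [hc] using this
  by_cases hi₀ : i = i₀
  · simp [hi₀, hg₀]
  · simp [hv i hi₀, Ne.symm hi]

noncomputable def regularSimplexWithApex (i₀ i₂ : ι) (c x y : ℝ) (i : ι) : EuclideanSpace ℝ ι :=
  if i = i₀ then single i₀ y + single i₂ x else single i c

namespace regularSimplexWithApex

variable {i₀ i₂ : ι} {c x y : ℝ}

lemma apply_of_ne {i : ι} (hi : i ≠ i₀) : regularSimplexWithApex i₀ i₂ c x y i = single i c :=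
  if_neg hi

variable [Fintype ι]

lemma dist_sq_of_ne {i j : ι} (hi : i ≠ i₀) (hj : j ≠ i₀) (hij : i ≠ j) :
    dist (regularSimplexWithApex i₀ i₂ c x y i) (regularSimplexWithApex i₀ i₂ c x y j) ^ 2 =
      2 * c ^ 2 := by
  rw [apply_of_ne hi, apply_of_ne hj, dist_single_sq, PiLp.norm_single]
  simp [Ne.symm hij]
  ring

lemma dist_apex_sq {j : ι} (hj : j ≠ i₀) (h₂ : i₂ ≠ i₀) :
    dist (regularSimplexWithApex i₀ i₂ c x y i₀) (regularSimplexWithApex i₀ i₂ c x y j) ^ 2 =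
      x ^ 2 + y ^ 2 + c ^ 2 - 2 * c * (if j = i₂ then x else 0) := by
  rw [apply_of_ne hj, regularSimplexWithApex, if_pos rfl, dist_single_sq,
    norm_single_add_single_sq h₂.symm, PiLp.add_apply, PiLp.single_apply, PiLp.single_apply,
    if_neg hj, zero_add]
  ring

lemma affineIndependent (hc : c ≠ 0) (hy : y ≠ 0) (h₂ : i₂ ≠ i₀) :
    AffineIndependent ℝ (regularSimplexWithApex i₀ i₂ c x y) :=
  (linearIndependent_of_eq_single_of_ne hc (fun _ => apply_of_ne) (by
    simp [regularSimplexWithApex, h₂.symm, hy])).affineIndependent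

end regularSimplexWithApex

end

lemma exists_regularSimplexWithApex_params {s t u : ℝ} (hs : 0 < s) (ht : 0 < t) (hu : 0 < u) :
    ∃ c x y : ℝ, c ≠ 0 ∧ y ≠ 0 ∧ 2 * c ^ 2 = s + t ∧ 2 * c * x = t ∧
      x ^ 2 + y ^ 2 + c ^ 2 = s + t + u := by
  set c := √((s + t) / 2)
  have hc : 2 * c ^ 2 = s + t := by
    rw [Real.sq_sqrt (by positivity)]; ring
  have hc₀ : c ≠ 0 := (Real.sqrt_pos.mpr (by positivity)).ne'
  set x := t / (2 * c)
  have hx : 2 * c * x = t := mul_div_cancel₀ t (by positivity)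
  have hxc : x ^ 2 < c ^ 2 := by
    have : 2 * (s + t) * x ^ 2 = t ^ 2 := by rw [← hc, ← hx]; ring
    nlinarith
  refine ⟨c, x, √(s + t + u - x ^ 2 - c ^ 2), hc₀, (Real.sqrt_pos.mpr (by linarith)).ne', hc,
    hx, ?_⟩
  rw [Real.sq_sqrt (by linarith)]
  ring

/-- existence of the simplex `A_d(s,t,u)`. Vertices are indexed by
`Fin (d+1)`, with index `0` playing the role of `p₁`, index `1` of `p₂`, index `2`
of `p₃`, etc. -/
theorem stmt6 (d : ℕ) (hd : 3 ≤ d) (s t u : ℝ) (hs : 0 < s) (ht : 0 < t) (hu : 0 < u) :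
    ∃ (N : ℕ) (p : Fin (d + 1) → EuclideanSpace ℝ (Fin N)),
      AffineIndependent ℝ p ∧
      dist (p 0) (p 1) ^ 2 = s + t + u ∧
      (∀ j : Fin (d + 1), 3 ≤ (j : ℕ) → dist (p 0) (p j) ^ 2 = s + t + u) ∧
      dist (p 0) (p 2) ^ 2 = s + u ∧
      (∀ i j : Fin (d + 1), 1 ≤ (i : ℕ) → i < j → dist (p i) (p j) ^ 2 = s + t) := by
  obtain ⟨c, x, y, hc, hy, hcc, hcx, hxyc⟩ := exists_regularSimplexWithApex_params hs ht hu
  obtain ⟨n, rfl⟩ : ∃ n, d = n + 3 := ⟨d - 3, by omega⟩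
  have h₀ : ((0 : Fin (n + 4)) : ℕ) = 0 := rfl
  have h₁ : ((1 : Fin (n + 4)) : ℕ) = 1 := rfl
  have h₂ : ((2 : Fin (n + 4)) : ℕ) = 2 := rfl
  have h₂₀ : (2 : Fin (n + 4)) ≠ 0 := Fin.ne_of_val_ne (by omega)
  set p := regularSimplexWithApex (0 : Fin (n + 4)) 2 c x y
  have far (j : Fin (n + 4)) (hj₀ : (j : ℕ) ≠ 0) (hj₂ : (j : ℕ) ≠ 2) :
      dist (p 0) (p j) ^ 2 = s + t + u := by
    rw [regularSimplexWithApex.dist_apex_sq (Fin.ne_of_val_ne hj₀) h₂₀,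
      if_neg (Fin.ne_of_val_ne hj₂), hxyc]
    ring
  refine ⟨n + 4, p, regularSimplexWithApex.affineIndependent hc hy h₂₀,
    far 1 (by omega) (by omega), fun j hj => far j (by omega) (by omega), ?_,
    fun i j hi hij => ?_⟩
  · rw [regularSimplexWithApex.dist_apex_sq h₂₀ h₂₀, if_pos rfl, hxyc]
    linarith
  · rw [regularSimplexWithApex.dist_sq_of_ne (Fin.ne_of_val_ne (by omega))
      (Fin.ne_of_val_ne (by omega)) hij.ne, hcc]
end

section
/- For every d ≥ 3 and s, t, u > 0, the d-simplex A_d(s,t,u) with squared edge lengths ‖p_1−p_2‖² = ‖p_1−p_j‖² = s+t+u (4 ≤ j ≤ d+1), ‖p_1−p_3‖² = s+u, ‖p_i−p_j‖² = s+t (2 ≤ i < j ≤ d+1), is diameter-Ramsey. -/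
/-!
The simplex `A_d(s,t,u)` embeds isometrically into the product of three regular simplices, with
squared edge lengths `s`, `t`, `u`, of sizes `d + 1`, `d + 1`, `2`, equipped with the `ℓ²`-product
metric. Any product of regular simplices with these edge lengths has diameter at most
`√(s + t + u) = diam A_d(s,t,u)`, and if its factors are large enough, iterated pigeonhole finds
in every colouring a monochromatic sub-product with the required factor sizes, hence a
monochromatic copy of `A_d(s,t,u)`.
-/

open Function Set Metric

section ProductRamsey

variable (C : Type*) [Finite C]

theorem exists_embedding_monochromatic (K : Type*) [Finite K] :
    ∃ n, ∀ χ : Fin n → C, ∃ g : K ↪ Fin n, ∀ a b, χ (g a) = χ (g b) := by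
  have := Fintype.ofFinite C
  have := Fintype.ofFinite K
  classical
  refine ⟨Fintype.card C * Fintype.card K + 1, fun χ => ?_⟩
  obtain ⟨c, hc⟩ := Fintype.exists_lt_card_fiber_of_mul_lt_card χ
    (by simp : Fintype.card C * Fintype.card K < Fintype.card (Fin _))
  let F := Finset.univ.filter fun x => χ x = c
  let g : K ↪ Fin _ := (Fintype.equivFin K).toEmbedding.trans <|
    (Fin.castLEEmb hc.le).trans (F.equivFin.symm.toEmbedding.trans (Embedding.subtype _))
  have hg : ∀ a, χ (g a) = c := fun a => (Finset.mem_filter.1 (F.equivFin.symm _).2).2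
  exact ⟨g, fun a b => (hg a).trans (hg b).symm⟩

/-- Each factor is found by pigeonhole on colourings of the remaining coordinates, the third
factor first. -/
theorem exists_monochromatic_box (K₁ K₂ K₃ : Type*) [Finite K₁] [Finite K₂] [Finite K₃] :
    ∃ n₁ n₂ n₃ : ℕ, ∀ χ : Fin n₁ × Fin n₂ × Fin n₃ → C,
      ∃ (g₁ : K₁ ↪ Fin n₁) (g₂ : K₂ ↪ Fin n₂) (g₃ : K₃ ↪ Fin n₃),
        ∀ x y, χ (Prod.map g₁ (Prod.map g₂ g₃) x) = χ (Prod.map g₁ (Prod.map g₂ g₃) y) := by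
  obtain ⟨n₁, H₁⟩ := exists_embedding_monochromatic (K₂ × K₃ → C) K₁
  obtain ⟨n₂, H₂⟩ := exists_embedding_monochromatic (Fin n₁ × K₃ → C) K₂
  obtain ⟨n₃, H₃⟩ := exists_embedding_monochromatic (Fin n₁ × Fin n₂ → C) K₃
  refine ⟨n₁, n₂, n₃, fun χ => ?_⟩
  obtain ⟨g₃, hthd⟩ := H₃ fun c ab => χ (ab.1, ab.2, c)
  obtain ⟨g₂, hsnd⟩ := H₂ fun b ac => χ (ac.1, b, g₃ ac.2)
  obtain ⟨g₁, h₁⟩ := H₁ fun a bc => χ (a, g₂ bc.1, g₃ bc.2)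
  refine ⟨g₁, g₂, g₃, fun ⟨i, j, l⟩ ⟨i', j', l'⟩ => ?_⟩
  calc χ (g₁ i, g₂ j, g₃ l) = χ (g₁ i', g₂ j, g₃ l) := congrFun (h₁ i i') (j, l)
    _ = χ (g₁ i', g₂ j', g₃ l) := congrFun (hsnd j j') (g₁ i', l)
    _ = χ (g₁ i', g₂ j', g₃ l') := congrFun (hthd l l') (g₁ i', g₂ j')

end ProductRamsey

theorem diam_range_le_of_dist_le {ι X Y : Type*} [Finite ι] [PseudoMetricSpace X]
    [PseudoMetricSpace Y] {f : ι → X} {g : ι → Y}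
    (h : ∀ i j, dist (f i) (f j) ≤ dist (g i) (g j)) :
    diam (range f) ≤ diam (range g) := by
  refine diam_le_of_forall_dist_le diam_nonneg ?_
  rintro _ ⟨i, rfl⟩ _ ⟨j, rfl⟩
  exact (h i j).trans (dist_le_diam_of_mem (finite_range g).isBounded ⟨i, rfl⟩ ⟨j, rfl⟩)

theorem isDiamRamsey_range_of_forall_exists {ι : Type*} [Finite ι] {m : ℕ}
    (p : ι → EuclideanSpace ℝ (Fin m))
    (h : ∀ q : ℕ, 0 < q → ∃ (N : ℕ) (R : Set (EuclideanSpace ℝ (Fin N))), R.Finite ∧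
      diam R ≤ diam (range p) ∧ ∀ χ : EuclideanSpace ℝ (Fin N) → Fin q,
        ∃ ψ : ι → EuclideanSpace ℝ (Fin N), range ψ ⊆ R ∧ (∀ i j, χ (ψ i) = χ (ψ j)) ∧
          ∀ i j, dist (ψ i) (ψ j) = dist (p i) (p j)) :
    IsDiamRamsey (range p) := by
  intro q hq
  obtain ⟨N, R, hR, hdiam, hcopy⟩ := h q hq
  refine ⟨N, R, hR, hdiam.antisymm ?_, fun χ => ?_⟩
  · obtain ⟨ψ, hψR, -, hψ⟩ := hcopy fun _ => ⟨0, hq⟩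
    calc diam (range p) ≤ diam (range ψ) := diam_range_le_of_dist_le fun i j => (hψ i j).ge
      _ ≤ diam R := diam_mono hψR hR.isBounded
  · obtain ⟨ψ, hψR, hmono, hψ⟩ := hcopy χ
    have hfac : p.FactorsThrough ψ := fun i j hij =>
      dist_eq_zero.1 (by rw [← hψ, hij, dist_self])
    refine ⟨range ψ, hψR, ?_, extend ψ p 0, ?_, ?_⟩
    · rintro _ ⟨i, rfl⟩ _ ⟨j, rfl⟩
      exact hmono i j
    · rw [← range_comp, hfac.extend_comp]
    · rintro _ ⟨i, rfl⟩ _ ⟨j, rfl⟩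
      rw [hfac.extend_apply, hfac.extend_apply, hψ]

section Geometry

variable {α β γ : Type*} [DecidableEq α] [DecidableEq β] [DecidableEq γ]

def weightedHamming (s t u : ℝ)
    (x y : α × β × γ) : ℝ :=
  (if x.1 = y.1 then 0 else s) + (if x.2.1 = y.2.1 then 0 else t) +
    (if x.2.2 = y.2.2 then 0 else u)

theorem weightedHamming_comm (s t u : ℝ)
    (x y : α × β × γ) : weightedHamming s t u x y = weightedHamming s t u y x := by
  simp only [weightedHamming, eq_comm]

theorem weightedHamming_self (s t u : ℝ)
    (x : α × β × γ) : weightedHamming s t u x x = 0 := by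
  simp [weightedHamming]

theorem weightedHamming_le {s t u : ℝ}
    (hs : 0 ≤ s) (ht : 0 ≤ t) (hu : 0 ≤ u) (x y : α × β × γ) :
    weightedHamming s t u x y ≤ s + t + u := by
  unfold weightedHamming; split_ifs <;> linarith

theorem weightedHamming_map {α' β' γ' : Type*} [DecidableEq α'] [DecidableEq β'] [DecidableEq γ']
    {f : α → α'} {g : β → β'} {h : γ → γ'} (hf : Injective f) (hg : Injective g)
    (hh : Injective h) (s t u : ℝ) (x y : α × β × γ) :
    weightedHamming s t u (Prod.map f (Prod.map g h) x) (Prod.map f (Prod.map g h) y) =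
      weightedHamming s t u x y := by
  simp only [weightedHamming, Prod.map_fst, Prod.map_snd, hf.eq_iff, hg.eq_iff, hh.eq_iff]

theorem sum_sub_pi_single_sq [Fintype α] (a b : α) (r : ℝ) :
    ∑ i, ((Pi.single a r : α → ℝ) i - (Pi.single b r : α → ℝ) i) ^ 2 =
      if a = b then 0 else 2 * r ^ 2 := by
  split_ifs with h
  · simp [h]
  · simp [sub_sq, Finset.sum_add_distrib, Pi.single_apply, Ne.symm h]
    ring

variable [Fintype α] [Fintype β] [Fintype γ]

-- A coordinate `√(s / 2)` makes two distinct vertices of a factor contribute `2 · (s / 2) = s`.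

noncomputable def hammingPoint (s t u : ℝ) (x : α × β × γ) : EuclideanSpace ℝ (α ⊕ β ⊕ γ) :=
  WithLp.toLp 2 (Sum.elim (Pi.single x.1 √(s / 2))
    (Sum.elim (Pi.single x.2.1 √(t / 2)) (Pi.single x.2.2 √(u / 2))))

theorem dist_hammingPoint_sq {s t u : ℝ} (hs : 0 ≤ s) (ht : 0 ≤ t) (hu : 0 ≤ u)
    (x y : α × β × γ) :
    dist (hammingPoint s t u x) (hammingPoint s t u y) ^ 2 = weightedHamming s t u x y := by
  rw [EuclideanSpace.dist_eq, Real.sq_sqrt (by positivity)]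
  simp only [Real.dist_eq, sq_abs, Fintype.sum_sum_type, hammingPoint, Sum.elim_inl, Sum.elim_inr]
  rw [sum_sub_pi_single_sq, sum_sub_pi_single_sq, sum_sub_pi_single_sq,
    Real.sq_sqrt (by positivity), Real.sq_sqrt (by positivity), Real.sq_sqrt (by positivity),
    weightedHamming]
  split_ifs <;> ring

end Geometry

/-- Vertex `i` goes to `(i, i, [i = 0])`, except that vertex `2` takes second coordinate `0`: the
pair `p₁ p₃` (vertices `0`, `2`) is the only one agreeing in the second factor, so it misses `t`. -/
def simplexCoord {d : ℕ} (i : Fin (d + 1)) : Fin (d + 1) × Fin (d + 1) × Bool :=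
  (i, if (i : ℕ) = 2 then 0 else i, decide ((i : ℕ) = 0))

theorem weightedHamming_simplexCoord {d : ℕ} {i j : Fin (d + 1)} (hlt : i < j) (s t u : ℝ) :
    weightedHamming s t u (simplexCoord i) (simplexCoord j) =
      s + (if (i : ℕ) = 0 ∧ (j : ℕ) = 2 then 0 else t) + (if (i : ℕ) = 0 then u else 0) := by
  have hsnd : ((if (i : ℕ) = 2 then 0 else i) = if (j : ℕ) = 2 then 0 else j) ↔
      (i : ℕ) = 0 ∧ (j : ℕ) = 2 := by
    have := Fin.lt_def.1 hlt
    rw [Fin.ext_iff, apply_ite Fin.val, apply_ite Fin.val, Fin.val_zero]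
    split_ifs <;> omega
  have hthd : decide ((i : ℕ) = 0) = decide ((j : ℕ) = 0) ↔ ¬(i : ℕ) = 0 := by
    have := Fin.lt_def.1 hlt
    rw [decide_eq_decide]
    omega
  simp only [weightedHamming, simplexCoord, hlt.ne, if_false, hsnd, hthd, ite_not]

theorem dist_sq_eq_weightedHamming_simplexCoord {X : Type*} [PseudoMetricSpace X] {d : ℕ}
    (hd : 2 ≤ d) {s t u : ℝ} {p : Fin (d + 1) → X}
    (h12 : dist (p 0) (p 1) ^ 2 = s + t + u)
    (h1j : ∀ j : Fin (d + 1), 3 ≤ (j : ℕ) → dist (p 0) (p j) ^ 2 = s + t + u)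
    (h13 : dist (p 0) (p 2) ^ 2 = s + u)
    (hij : ∀ i j : Fin (d + 1), 1 ≤ (i : ℕ) → i < j → dist (p i) (p j) ^ 2 = s + t)
    (i j : Fin (d + 1)) :
    dist (p i) (p j) ^ 2 = weightedHamming s t u (simplexCoord i) (simplexCoord j) := by
  wlog hlt : i < j generalizing i j
  · rcases (not_lt.1 hlt).lt_or_eq with hgt | rfl
    · rw [dist_comm, this j i hgt, weightedHamming_comm]
    · rw [dist_self, weightedHamming_self]; ring
  rw [weightedHamming_simplexCoord hlt]
  rcases Nat.eq_zero_or_pos i with hi | hi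
  · obtain rfl : i = 0 := Fin.ext hi
    have hj : (j : ℕ) = 1 ∨ (j : ℕ) = 2 ∨ 3 ≤ (j : ℕ) := by rw [Fin.lt_def] at hlt; omega
    have h1 : ((1 : Fin (d + 1)) : ℕ) = 1 := by simp; omega
    have h2 : ((2 : Fin (d + 1)) : ℕ) = 2 := by simp; omega
    rcases hj with hj | hj | hj
    · obtain rfl : j = 1 := Fin.ext (hj.trans h1.symm)
      rw [h12, h1, Fin.val_zero]; norm_num
    · obtain rfl : j = 2 := Fin.ext (hj.trans h2.symm)
      rw [h13, h2, Fin.val_zero]; norm_num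
    · simp [h1j j hj, show (j : ℕ) ≠ 2 by omega]
  · simp [hij i j hi hlt, hi.ne']

-- Vertex `0` is `p₁`, vertex `1` is `p₂`, vertex `2` is `p₃`.
theorem stmt7_general (d : ℕ) (hd : 3 ≤ d) (s t u : ℝ) (hs : 0 < s) (ht : 0 < t) (hu : 0 < u)
    {N : ℕ} (p : Fin (d + 1) → EuclideanSpace ℝ (Fin N))
    (h12 : dist (p 0) (p 1) ^ 2 = s + t + u)
    (h1j : ∀ j : Fin (d + 1), 3 ≤ (j : ℕ) → dist (p 0) (p j) ^ 2 = s + t + u)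
    (h13 : dist (p 0) (p 2) ^ 2 = s + u)
    (hij : ∀ i j : Fin (d + 1), 1 ≤ (i : ℕ) → i < j → dist (p i) (p j) ^ 2 = s + t) :
    IsDiamRamsey (Set.range p) := by
  have hp := dist_sq_eq_weightedHamming_simplexCoord (by omega) h12 h1j h13 hij
  refine isDiamRamsey_range_of_forall_exists p fun q _ => ?_
  obtain ⟨n₁, n₂, n₃, hbox⟩ := exists_monochromatic_box (Fin q) (Fin (d + 1)) (Fin (d + 1)) Bool
  let Φ := LinearIsometryEquiv.piLpCongrLeft 2 ℝ ℝ (Fintype.equivFin (Fin n₁ ⊕ Fin n₂ ⊕ Fin n₃))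
  let P x := Φ (hammingPoint s t u x)
  have hP x y : dist (P x) (P y) ^ 2 = weightedHamming s t u x y := by
    rw [Φ.dist_map, dist_hammingPoint_sq hs.le ht.le hu.le]
  refine ⟨_, range P, finite_range P, ?_, fun χ => ?_⟩
  · refine diam_le_of_forall_dist_le diam_nonneg ?_
    rintro _ ⟨x, rfl⟩ _ ⟨y, rfl⟩
    calc dist (P x) (P y) ≤ dist (p 0) (p 1) := by
          rw [← sq_le_sq₀ dist_nonneg dist_nonneg, hP, h12]
          exact weightedHamming_le hs.le ht.le hu.le x y
      _ ≤ diam (range p) := dist_le_diam_of_mem (finite_range p).isBounded ⟨0, rfl⟩ ⟨1, rfl⟩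
  · obtain ⟨g₁, g₂, g₃, hmono⟩ := hbox (χ ∘ P)
    refine ⟨fun i => P (Prod.map g₁ (Prod.map g₂ g₃) (simplexCoord i)), ?_,
      fun i j => hmono _ _, fun i j => ?_⟩
    · rintro _ ⟨i, rfl⟩
      exact ⟨_, rfl⟩
    · rw [← sq_eq_sq₀ dist_nonneg dist_nonneg, hP, hp,
        weightedHamming_map g₁.injective g₂.injective g₃.injective]

/-- the simplex `A_d(s,t,u)` is diameter-Ramsey. Vertex `0` plays the role
of `p₁`, vertex `1` of `p₂`, vertex `2` of `p₃`. -/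
theorem stmt7 (d : ℕ) (hd : 3 ≤ d) (s t u : ℝ) (hs : 0 < s) (ht : 0 < t) (hu : 0 < u)
    {N : ℕ} (p : Fin (d + 1) → EuclideanSpace ℝ (Fin N))
    (hind : AffineIndependent ℝ p)
    (h12 : dist (p 0) (p 1) ^ 2 = s + t + u)
    (h1j : ∀ j : Fin (d + 1), 3 ≤ (j : ℕ) → dist (p 0) (p j) ^ 2 = s + t + u)
    (h13 : dist (p 0) (p 2) ^ 2 = s + u)
    (hij : ∀ i j : Fin (d + 1), 1 ≤ (i : ℕ) → i < j → dist (p i) (p j) ^ 2 = s + t) :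
    IsDiamRamsey (Set.range p) :=
  stmt7_general d hd s t u hs ht hu p h12 h1j h13 hij
end

section
/- For every integer d ≥ 3, there exists a diameter-Ramsey d-simplex whose circumcenter lies outside its convex hull. -/
open Finset


variable {κ L : Type*} [Fintype κ] [Fintype L] [DecidableEq L]

/-- encode a word as a 0/1 vector -/
noncomputable def enc (u : κ → L) : EuclideanSpace ℝ (κ × L) :=
  WithLp.toLp 2 (fun p : κ × L => if u p.1 = p.2 then 1 else 0)

lemma key1 {a b : L} (hab : a ≠ b) :
    ∑ l : L, ((if a = l then (1:ℝ) else 0) - (if b = l then 1 else 0))^2 = 2 := by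
  have h : ∀ l : L, ((if a = l then (1:ℝ) else 0) - (if b = l then 1 else 0))^2
      = (if a = l then (1:ℝ) else 0) + (if b = l then 1 else 0) := by
    intro l
    by_cases h1 : a = l <;> by_cases h2 : b = l
    · exact absurd (h1.trans h2.symm) hab
    · simp [h1, h2]
    · simp [h1, h2]
    · simp [h1, h2]
  rw [Finset.sum_congr rfl (fun l _ => h l), Finset.sum_add_distrib,
    Finset.sum_ite_eq univ a (fun _ => (1:ℝ)), Finset.sum_ite_eq univ b (fun _ => (1:ℝ))]
  simp; norm_num

lemma key2 (a b : L) :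
    ∑ l : L, (if a = l then (1:ℝ) else 0) * (if b = l then 1 else 0)
      = if a = b then 1 else 0 := by
  by_cases hab : a = b
  · subst hab
    simp only [if_pos rfl]
    have h : ∀ l : L, (if a = l then (1:ℝ) else 0) * (if a = l then 1 else 0)
        = if a = l then (1:ℝ) else 0 := by
      intro l; by_cases h : a = l <;> simp [h]
    rw [Finset.sum_congr rfl (fun l _ => h l), Finset.sum_ite_eq univ a (fun _ => (1:ℝ))]
    simp
  · simp only [if_neg hab]
    rw [Finset.sum_congr rfl (fun l _ => ?_), Finset.sum_const_zero]
    by_cases h1 : a = l <;> by_cases h2 : b = l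
    · exact absurd (h1.trans h2.symm) hab
    · simp [h1, h2]
    · simp [h1, h2]
    · simp [h1, h2]

lemma enc_dist_sq (u v : κ → L) :
    (dist (enc u) (enc v))^2 = ∑ f : κ, (if u f = v f then (0:ℝ) else 2) := by
  rw [EuclideanSpace.dist_eq, Real.sq_sqrt (by positivity)]
  simp only [Real.dist_eq, sq_abs]
  rw [Fintype.sum_prod_type]
  refine Finset.sum_congr rfl (fun f _ => ?_)
  by_cases h : u f = v f
  · simp [enc, h]
  · rw [if_neg h]
    exact key1 h

lemma enc_dist (u v : κ → L) :
    dist (enc u) (enc v) = Real.sqrt (∑ f : κ, (if u f = v f then (0:ℝ) else 2)) := by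
  rw [← enc_dist_sq u v, Real.sqrt_sq dist_nonneg]

lemma enc_inner (u v : κ → L) :
    inner ℝ (enc u) (enc v) = ∑ f : κ, (if u f = v f then (1:ℝ) else 0) := by
  rw [PiLp.inner_apply, Fintype.sum_prod_type]
  refine Finset.sum_congr rfl (fun f _ => ?_)
  simp only [enc, RCLike.inner_apply, starRingEnd_apply, star_trivial]
  rw [← key2 (u f) (v f)]
  exact Finset.sum_congr rfl (fun l _ => mul_comm _ _)


-- target labels of the merged class of factor f
def tg1 {d : ℕ} (f : Fin d × Fin d) : ℕ :=
  if f.1.val = 0 ∧ f.2.val = 1 then 1 else if f.1.val = 1 ∧ f.2.val = 0 then 2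
  else f.1.val + 1

def tg2 {d : ℕ} (f : Fin d × Fin d) : ℕ :=
  if f.1.val = 0 ∧ f.2.val = 1 then 1 else if f.1.val = 1 ∧ f.2.val = 0 then 2
  else f.2.val + 1

def memv {d : ℕ} (x : ℕ) (f : Fin d × Fin d) : Prop :=
  x = 0 ∨ x = tg1 f ∨ x = tg2 f

instance {d : ℕ} (x : ℕ) (f : Fin d × Fin d) : Decidable (memv x f) := by
  unfold memv; infer_instance

def lab {d : ℕ} (x : Fin (d+1)) (f : Fin d × Fin d) : Fin (d+1) :=
  if memv x.val f then 0 else x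

lemma mem0 {d : ℕ} (f : Fin d × Fin d) : memv 0 f := Or.inl rfl

lemma mem1_iff {d : ℕ} (i j : Fin d) :
    memv 1 (i, j) ↔ ((i.val = 0 ∨ j.val = 0) ∧ ¬(i.val = 1 ∧ j.val = 0)) := by
  unfold memv tg1 tg2
  by_cases h1 : i.val = 0 ∧ j.val = 1 <;> by_cases h2 : i.val = 1 ∧ j.val = 0 <;>
    simp [h1, h2] <;> omega

lemma mem2_iff {d : ℕ} (i j : Fin d) :
    memv 2 (i, j) ↔ ((i.val = 1 ∨ j.val = 1) ∧ ¬(i.val = 0 ∧ j.val = 1)) := by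
  unfold memv tg1 tg2
  by_cases h1 : i.val = 0 ∧ j.val = 1 <;> by_cases h2 : i.val = 1 ∧ j.val = 0 <;>
    simp [h1, h2] <;> omega

lemma memv_iff {d : ℕ} (v : ℕ) (hv : 3 ≤ v) (i j : Fin d) :
    memv v (i, j) ↔ (i.val = v - 1 ∨ j.val = v - 1) := by
  unfold memv tg1 tg2
  by_cases h1 : i.val = 0 ∧ j.val = 1 <;> by_cases h2 : i.val = 1 ∧ j.val = 0 <;>
    simp [h1, h2] <;> omega

lemma lab_eq_iff {d : ℕ} {x y : Fin (d+1)} (hxy : x ≠ y) (f : Fin d × Fin d) :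
    lab x f = lab y f ↔ (memv x.val f ∧ memv y.val f) := by
  unfold lab
  by_cases hx : memv x.val f <;> by_cases hy : memv y.val f <;> simp [hx, hy]
  · intro h
    apply hy
    have : y.val = 0 := by
      have := congrArg Fin.val h
      simp only [Fin.val_zero] at this; omega
    rw [this]; exact mem0 f
  · intro h
    apply hx
    have : x.val = 0 := by have := congrArg Fin.val h; simp only [Fin.val_zero] at this; omega
    rw [this]; exact mem0 f
  · exact hxy

section Helpers
lemma spike_fin {α : Type*} [Fintype α] [DecidableEq α] (a : α) (r : ℝ) :
    ∑ i : α, (if i = a then r else 0) = r := by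
  rw [Finset.sum_ite_eq' univ a (fun _ => r)]; simp

lemma spike_val {n : ℕ} (a : ℕ) (ha : a < n) (r : ℝ) :
    ∑ i : Fin n, (if i.val = a then r else 0) = r := by
  have h : ∀ i : Fin n, (if i.val = a then r else 0) = if i = ⟨a, ha⟩ then r else 0 := by
    intro i; simp [Fin.ext_iff]
  rw [Finset.sum_congr rfl (fun i _ => h i), spike_fin]

lemma sum_fin_card {n : ℕ} (r : ℝ) : ∑ _i : Fin n, r = (n : ℝ) * r := by
  rw [Finset.sum_const, Finset.card_univ, Fintype.card_fin, nsmul_eq_mul]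

lemma sum_ite_val {d : ℕ} (a : ℕ) (ha : a < d) (X Y : ℝ) :
    ∑ i : Fin d, (if i.val = a then X else Y) = X + ((d:ℝ) - 1) * Y := by
  have h : ∀ i : Fin d, (if i.val = a then X else Y) = Y + (if i.val = a then X - Y else 0) := by
    intro i; by_cases h : i.val = a <;> simp [h]
  rw [Finset.sum_congr rfl (fun i _ => h i), Finset.sum_add_distrib, sum_fin_card,
    spike_val a ha]
  ring

lemma sum_ite_val2 {d : ℕ} (a b : ℕ) (hab : a ≠ b) (ha : a < d) (hb : b < d) (X Y Z : ℝ) :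
    ∑ i : Fin d, (if i.val = a then X else if i.val = b then Y else Z)
      = X + Y + ((d:ℝ) - 2) * Z := by
  have h : ∀ i : Fin d, (if i.val = a then X else if i.val = b then Y else Z)
      = Z + (if i.val = a then X - Z else 0) + (if i.val = b then Y - Z else 0) := by
    intro i
    by_cases h1 : i.val = a <;> by_cases h2 : i.val = b
    · exact absurd (h1.symm.trans h2) hab
    · simp [h1, h2, hab]
    · have : b ≠ a := fun hh => hab hh.symm
      simp [h1, h2, this]
    · simp [h1, h2]
  rw [Finset.sum_congr rfl (fun i _ => h i), Finset.sum_add_distrib, Finset.sum_add_distrib,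
    sum_fin_card, spike_val a ha, spike_val b hb]
  ring
end Helpers

noncomputable def Sc {d : ℕ} (x y : Fin (d+1)) : ℝ :=
  ∑ f : Fin d × Fin d, (if lab x f = lab y f then (1:ℝ) else 0)

lemma Sc_comm {d : ℕ} (x y : Fin (d+1)) : Sc x y = Sc y x := by
  unfold Sc
  refine Finset.sum_congr rfl (fun f _ => ?_)
  by_cases h : lab x f = lab y f
  · rw [if_pos h, if_pos h.symm]
  · rw [if_neg h, if_neg (fun hh => h hh.symm)]

lemma Sc_self {d : ℕ} (x : Fin (d+1)) : Sc x x = (d:ℝ)^2 := by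
  unfold Sc
  rw [Finset.sum_congr rfl (fun f _ => if_pos rfl), Finset.sum_const, Finset.card_univ]
  simp [Fintype.card_prod]
  ring

lemma Sc_eq_mem {d : ℕ} {x y : Fin (d+1)} (hxy : x ≠ y) :
    Sc x y = ∑ f : Fin d × Fin d, (if memv x.val f ∧ memv y.val f then (1:ℝ) else 0) := by
  unfold Sc
  refine Finset.sum_congr rfl (fun f _ => ?_)
  by_cases h : memv x.val f ∧ memv y.val f
  · rw [if_pos ((lab_eq_iff hxy f).2 h), if_pos h]
  · rw [if_neg (fun hh => h ((lab_eq_iff hxy f).1 hh)), if_neg h]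


lemma grid_ramsey (q m : ℕ) : ∀ t : ℕ, ∃ n, 2 ≤ n ∧
    ∀ χ : ((Fin t → Fin n) → Fin q), ∃ (g : Fin t → (Fin m ↪ Fin n)) (c : Fin q),
      ∀ σ : Fin t → Fin m, χ (fun i => g i (σ i)) = c := by
  intro t
  induction t with
  | zero =>
      refine ⟨2, le_refl _, fun χ => ⟨(fun i => i.elim0), χ (fun i => i.elim0), fun σ => ?_⟩⟩
      congr 1; funext i; exact i.elim0
  | succ t ih =>
      obtain ⟨n', hn', H⟩ := ih
      classical
      refine ⟨n' + (Fintype.card ((Fin t → Fin n') → Fin q) * m + 1), by omega, fun χ => ?_⟩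
      have hle : n' ≤ n' + (Fintype.card ((Fin t → Fin n') → Fin q) * m + 1) := by omega
      set slice : Fin (n' + (Fintype.card ((Fin t → Fin n') → Fin q) * m + 1)) → ((Fin t → Fin n') → Fin q) :=
        fun a τ => χ (Fin.cons a (fun i => Fin.castLE hle (τ i))) with hslice
      have hcard : Fintype.card ((Fin t → Fin n') → Fin q) * m < Fintype.card (Fin (n' + (Fintype.card ((Fin t → Fin n') → Fin q) * m + 1))) := by
        simp only [Fintype.card_fin]; omega
      obtain ⟨y, hy⟩ := Fintype.exists_lt_card_fiber_of_mul_lt_card slice hcard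
      obtain ⟨s, hs, hscard⟩ := Finset.exists_subset_card_eq (le_of_lt hy)
      set e0 := s.orderEmbOfFin hscard with he0
      have he0y : ∀ i : Fin m, slice (e0 i) = y := by
        intro i
        have := hs (s.orderEmbOfFin_mem hscard i)
        simpa using (Finset.mem_filter.mp this).2
      obtain ⟨g', c, hg'⟩ := H y
      set G := Fin.cons (α := fun _ : Fin (t+1) =>
          Fin m ↪ Fin (n' + (Fintype.card ((Fin t → Fin n') → Fin q) * m + 1)))
        e0.toEmbedding (fun i => (g' i).trans (Fin.castLEEmb hle)) with hG
      refine ⟨G, c, fun σ => ?_⟩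
      have h1 : (fun i : Fin (t+1) => G i (σ i))
          = Fin.cons (e0 (σ 0)) (fun i => Fin.castLE hle ((g' i) (σ i.succ))) := by
        funext i
        refine Fin.cases ?_ (fun i => ?_) i
        · simp [hG]
        · simp [hG, Fin.cons_succ]
      rw [h1]
      have h2 : χ (Fin.cons (e0 (σ 0)) (fun i => Fin.castLE hle ((g' i) (σ i.succ))))
          = slice (e0 (σ 0)) (fun i => (g' i) (σ i.succ)) := rfl
      rw [h2, he0y, hg']
section Counts
variable {d : ℕ}

lemma Sc_01 (hd : 3 ≤ d) :
    Sc (⟨0, by omega⟩ : Fin (d+1)) ⟨1, by omega⟩ = 2*(d:ℝ) - 2 := by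
  rw [Sc_eq_mem (by simp [Fin.ext_iff])]
  rw [Fintype.sum_prod_type]
  have inner : ∀ i : Fin d,
      (∑ j : Fin d, if memv (0:ℕ) (i,j) ∧ memv 1 (i,j) then (1:ℝ) else 0)
        = if i.val = 0 then (d:ℝ) else if i.val = 1 then 0 else 1 := by
    intro i
    have hc : ∀ j : Fin d, (memv (0:ℕ) (i,j) ∧ memv 1 (i,j)) ↔
        ((i.val = 0 ∨ j.val = 0) ∧ ¬(i.val = 1 ∧ j.val = 0)) := by
      intro j
      rw [mem1_iff i j]
      simp [mem0]
    rw [Finset.sum_congr rfl (fun j _ => if_congr (hc j) rfl rfl)]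
    by_cases h0 : i.val = 0
    · rw [if_pos h0]
      rw [Finset.sum_congr rfl (fun j _ => if_pos (by constructor <;> omega)), sum_fin_card]
      ring
    · by_cases h1 : i.val = 1
      · rw [if_neg h0, if_pos h1]
        rw [Finset.sum_congr rfl (fun j _ => if_neg (by omega)), Finset.sum_const_zero]
      · rw [if_neg h0, if_neg h1]
        rw [Finset.sum_congr rfl (fun j _ =>
          if_congr (show _ ↔ j.val = 0 by constructor <;> omega) rfl rfl)]
        exact spike_val 0 (by omega) 1
  rw [Finset.sum_congr rfl (fun i _ => inner i),
    sum_ite_val2 0 1 (by omega) (by omega) (by omega)]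
  ring
end Counts
section Counts2
variable {d : ℕ}

lemma Sc_02 (hd : 3 ≤ d) :
    Sc (⟨0, by omega⟩ : Fin (d+1)) ⟨2, by omega⟩ = 2*(d:ℝ) - 2 := by
  rw [Sc_eq_mem (by simp [Fin.ext_iff])]
  rw [Fintype.sum_prod_type]
  have inner : ∀ i : Fin d,
      (∑ j : Fin d, if memv (0:ℕ) (i,j) ∧ memv 2 (i,j) then (1:ℝ) else 0)
        = if i.val = 0 then 0 else if i.val = 1 then (d:ℝ) else 1 := by
    intro i
    have hc : ∀ j : Fin d, (memv (0:ℕ) (i,j) ∧ memv 2 (i,j)) ↔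
        ((i.val = 1 ∨ j.val = 1) ∧ ¬(i.val = 0 ∧ j.val = 1)) := by
      intro j; rw [mem2_iff i j]; simp [mem0]
    rw [Finset.sum_congr rfl (fun j _ => if_congr (hc j) rfl rfl)]
    by_cases h0 : i.val = 0
    · rw [if_pos h0]
      rw [Finset.sum_congr rfl (fun j _ => if_neg (by omega)), Finset.sum_const_zero]
    · by_cases h1 : i.val = 1
      · rw [if_neg h0, if_pos h1]
        rw [Finset.sum_congr rfl (fun j _ => if_pos (by constructor <;> omega)), sum_fin_card]
        ring
      · rw [if_neg h0, if_neg h1]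
        rw [Finset.sum_congr rfl (fun j _ =>
          if_congr (show _ ↔ j.val = 1 by constructor <;> omega) rfl rfl)]
        exact spike_val 1 (by omega) 1
  rw [Finset.sum_congr rfl (fun i _ => inner i),
    sum_ite_val2 0 1 (by omega) (by omega) (by omega)]
  ring

lemma Sc_0v (hd : 3 ≤ d) (y : Fin (d+1)) (hy : 3 ≤ y.val) :
    Sc (⟨0, by omega⟩ : Fin (d+1)) y = 2*(d:ℝ) - 1 := by
  rw [Sc_eq_mem (by simp [Fin.ext_iff]; omega)]
  rw [Fintype.sum_prod_type]
  have inner : ∀ i : Fin d,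
      (∑ j : Fin d, if memv (0:ℕ) (i,j) ∧ memv y.val (i,j) then (1:ℝ) else 0)
        = if i.val = y.val - 1 then (d:ℝ) else 1 := by
    intro i
    have hc : ∀ j : Fin d, (memv (0:ℕ) (i,j) ∧ memv y.val (i,j)) ↔
        (i.val = y.val - 1 ∨ j.val = y.val - 1) := by
      intro j; rw [memv_iff y.val hy i j]; simp [mem0]
    rw [Finset.sum_congr rfl (fun j _ => if_congr (hc j) rfl rfl)]
    by_cases h0 : i.val = y.val - 1
    · rw [if_pos h0]
      rw [Finset.sum_congr rfl (fun j _ => if_pos (Or.inl h0)), sum_fin_card]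
      ring
    · rw [if_neg h0]
      rw [Finset.sum_congr rfl (fun j _ =>
        if_congr (show _ ↔ j.val = y.val - 1 by constructor <;> omega) rfl rfl)]
      exact spike_val (y.val - 1) (by omega) 1
  rw [Finset.sum_congr rfl (fun i _ => inner i),
    sum_ite_val (y.val - 1) (by omega)]
  ring

lemma Sc_12 (hd : 3 ≤ d) :
    Sc (⟨1, by omega⟩ : Fin (d+1)) ⟨2, by omega⟩ = 0 := by
  rw [Sc_eq_mem (by simp [Fin.ext_iff])]
  rw [Fintype.sum_prod_type]
  rw [Finset.sum_congr rfl (fun i _ => Finset.sum_congr rfl (fun j _ => if_neg ?_))]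
  · simp
  · rw [mem1_iff i j, mem2_iff i j]
    omega

lemma Sc_1v (hd : 3 ≤ d) (y : Fin (d+1)) (hy : 3 ≤ y.val) :
    Sc (⟨1, by omega⟩ : Fin (d+1)) y = 2 := by
  rw [Sc_eq_mem (by simp [Fin.ext_iff]; omega)]
  rw [Fintype.sum_prod_type]
  have inner : ∀ i : Fin d,
      (∑ j : Fin d, if memv (1:ℕ) (i,j) ∧ memv y.val (i,j) then (1:ℝ) else 0)
        = if i.val = 0 then 1 else if i.val = y.val - 1 then 1 else 0 := by
    intro i
    have hc : ∀ j : Fin d, (memv (1:ℕ) (i,j) ∧ memv y.val (i,j)) ↔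
        ((i.val = 0 ∧ j.val = y.val - 1) ∨ (i.val = y.val - 1 ∧ j.val = 0)) := by
      intro j; rw [mem1_iff i j, memv_iff y.val hy i j]; omega
    rw [Finset.sum_congr rfl (fun j _ => if_congr (hc j) rfl rfl)]
    by_cases h0 : i.val = 0
    · rw [if_pos h0]
      rw [Finset.sum_congr rfl (fun j _ =>
        if_congr (show _ ↔ j.val = y.val - 1 by constructor <;> omega) rfl rfl)]
      exact spike_val (y.val - 1) (by omega) 1
    · by_cases h1 : i.val = y.val - 1
      · rw [if_neg h0, if_pos h1]
        rw [Finset.sum_congr rfl (fun j _ =>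
          if_congr (show _ ↔ j.val = 0 by constructor <;> omega) rfl rfl)]
        exact spike_val 0 (by omega) 1
      · rw [if_neg h0, if_neg h1]
        rw [Finset.sum_congr rfl (fun j _ => if_neg (by omega)), Finset.sum_const_zero]
  rw [Finset.sum_congr rfl (fun i _ => inner i),
    sum_ite_val2 0 (y.val - 1) (by omega) (by omega) (by omega)]
  ring

lemma Sc_2v (hd : 3 ≤ d) (y : Fin (d+1)) (hy : 3 ≤ y.val) :
    Sc (⟨2, by omega⟩ : Fin (d+1)) y = 2 := by
  rw [Sc_eq_mem (by simp [Fin.ext_iff]; omega)]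
  rw [Fintype.sum_prod_type]
  have inner : ∀ i : Fin d,
      (∑ j : Fin d, if memv (2:ℕ) (i,j) ∧ memv y.val (i,j) then (1:ℝ) else 0)
        = if i.val = 1 then 1 else if i.val = y.val - 1 then 1 else 0 := by
    intro i
    have hc : ∀ j : Fin d, (memv (2:ℕ) (i,j) ∧ memv y.val (i,j)) ↔
        ((i.val = 1 ∧ j.val = y.val - 1) ∨ (i.val = y.val - 1 ∧ j.val = 1)) := by
      intro j; rw [mem2_iff i j, memv_iff y.val hy i j]; omega
    rw [Finset.sum_congr rfl (fun j _ => if_congr (hc j) rfl rfl)]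
    by_cases h0 : i.val = 1
    · rw [if_pos h0]
      rw [Finset.sum_congr rfl (fun j _ =>
        if_congr (show _ ↔ j.val = y.val - 1 by constructor <;> omega) rfl rfl)]
      exact spike_val (y.val - 1) (by omega) 1
    · by_cases h1 : i.val = y.val - 1
      · rw [if_neg h0, if_pos h1]
        rw [Finset.sum_congr rfl (fun j _ =>
          if_congr (show _ ↔ j.val = 1 by constructor <;> omega) rfl rfl)]
        exact spike_val 1 (by omega) 1
      · rw [if_neg h0, if_neg h1]
        rw [Finset.sum_congr rfl (fun j _ => if_neg (by omega)), Finset.sum_const_zero]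
  rw [Finset.sum_congr rfl (fun i _ => inner i),
    sum_ite_val2 1 (y.val - 1) (by omega) (by omega) (by omega)]
  ring

lemma Sc_vv (hd : 3 ≤ d) (x y : Fin (d+1)) (hx : 3 ≤ x.val) (hy : 3 ≤ y.val)
    (hxy : x ≠ y) :
    Sc x y = 2 := by
  have hxyv : x.val ≠ y.val := fun h => hxy (Fin.ext h)
  rw [Sc_eq_mem hxy]
  rw [Fintype.sum_prod_type]
  have inner : ∀ i : Fin d,
      (∑ j : Fin d, if memv x.val (i,j) ∧ memv y.val (i,j) then (1:ℝ) else 0)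
        = if i.val = x.val - 1 then 1 else if i.val = y.val - 1 then 1 else 0 := by
    intro i
    have hc : ∀ j : Fin d, (memv x.val (i,j) ∧ memv y.val (i,j)) ↔
        ((i.val = x.val - 1 ∧ j.val = y.val - 1) ∨ (i.val = y.val - 1 ∧ j.val = x.val - 1)) := by
      intro j; rw [memv_iff x.val hx i j, memv_iff y.val hy i j]; omega
    rw [Finset.sum_congr rfl (fun j _ => if_congr (hc j) rfl rfl)]
    by_cases h0 : i.val = x.val - 1
    · rw [if_pos h0]
      rw [Finset.sum_congr rfl (fun j _ =>
        if_congr (show _ ↔ j.val = y.val - 1 by constructor <;> omega) rfl rfl)]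
      exact spike_val (y.val - 1) (by omega) 1
    · by_cases h1 : i.val = y.val - 1
      · rw [if_neg h0, if_pos h1]
        rw [Finset.sum_congr rfl (fun j _ =>
          if_congr (show _ ↔ j.val = x.val - 1 by constructor <;> omega) rfl rfl)]
        exact spike_val (x.val - 1) (by omega) 1
      · rw [if_neg h0, if_neg h1]
        rw [Finset.sum_congr rfl (fun j _ => if_neg (by omega)), Finset.sum_const_zero]
  rw [Finset.sum_congr rfl (fun i _ => inner i),
    sum_ite_val2 (x.val - 1) (y.val - 1) (by omega) (by omega) (by omega)]
  ring
end Counts2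
noncomputable section CircDefs
variable (d : ℕ)

def Qd : ℝ := (d:ℝ)^5 - 3*(d:ℝ)^4 + 18*(d:ℝ)^2 - 34*(d:ℝ) + 20
def lam0 : ℝ := (-(d:ℝ)^4 + 3*(d:ℝ)^3 + 4*(d:ℝ)^2 - 20*(d:ℝ) + 16) / Qd d
def muv : ℝ := ((d:ℝ)^4 - 2*(d:ℝ)^3 - 2*(d:ℝ)^2 + 11*(d:ℝ) - 10) / Qd d
def nuv : ℝ := ((d:ℝ)^4 - 2*(d:ℝ)^3 - 3*(d:ℝ)^2 + 12*(d:ℝ) - 12) / Qd d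
def lamf (y : Fin (d+1)) : ℝ :=
  if y.val = 0 then lam0 d else if y.val = 1 then muv d else if y.val = 2 then muv d else nuv d
def Gd : ℝ := (2*(d:ℝ)-2) * lam0 d + (d:ℝ)^2 * muv d + (2*(d:ℝ)-4) * nuv d

end CircDefs

section CircAlg
variable {d : ℕ}

lemma dR_ge (hd : 3 ≤ d) : (3:ℝ) ≤ (d:ℝ) := by exact_mod_cast hd

lemma Qd_pos (hd : 3 ≤ d) : 0 < Qd d := by
  have hx := dR_ge hd
  unfold Qd
  nlinarith [pow_pos (by linarith : (0:ℝ) < (d:ℝ)) 4, sq_nonneg ((d:ℝ) - 3),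
    sq_nonneg ((d:ℝ) - 1), pow_pos (by linarith : (0:ℝ) < (d:ℝ)) 2]

lemma Qd_ne (hd : 3 ≤ d) : Qd d ≠ 0 := ne_of_gt (Qd_pos hd)

lemma sum_lam (hd : 3 ≤ d) : lam0 d + 2*muv d + ((d:ℝ)-2)*nuv d = 1 := by
  unfold lam0 muv nuv
  field_simp [Qd_ne hd]
  unfold Qd
  ring

lemma G0_eq (hd : 3 ≤ d) :
    (d:ℝ)^2*lam0 d + (4*(d:ℝ)-4)*muv d + ((d:ℝ)-2)*(2*(d:ℝ)-1)*nuv d = Gd d := by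
  unfold Gd lam0 muv nuv
  field_simp [Qd_ne hd]
  ring

lemma G3_eq (hd : 3 ≤ d) :
    (2*(d:ℝ)-1)*lam0 d + 4*muv d + ((d:ℝ)^2+2*(d:ℝ)-6)*nuv d = Gd d := by
  unfold Gd lam0 muv nuv
  field_simp [Qd_ne hd]
  ring

lemma G_lt (hd : 3 ≤ d) : Gd d < 2*(d:ℝ) - 2 := by
  have hx := dR_ge hd
  have hmn : muv d - 2*nuv d < 0 := by
    have h1 : muv d - 2*nuv d
        = (-(d:ℝ)^4 + 2*(d:ℝ)^3 + 4*(d:ℝ)^2 - 13*(d:ℝ) + 14) / Qd d := by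
      unfold muv nuv
      field_simp [Qd_ne hd]
      ring
    rw [h1]
    apply div_neg_of_neg_of_pos _ (Qd_pos hd)
    nlinarith [sq_nonneg ((d:ℝ) - 3), sq_nonneg ((d:ℝ) - 1)]
  have hkey : Gd d - (2*(d:ℝ)-2) * (lam0 d + 2*muv d + ((d:ℝ)-2)*nuv d)
      = ((d:ℝ)-2)^2 * (muv d - 2*nuv d) := by
    unfold Gd
    ring
  rw [sum_lam hd, mul_one] at hkey
  have h2 : ((d:ℝ)-2)^2 * (muv d - 2*nuv d) < 0 :=
    mul_neg_of_pos_of_neg (by nlinarith) hmn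
  linarith

end CircAlg
noncomputable section PADef
variable (d : ℕ)

def pA (x : Fin (d+1)) : EuclideanSpace ℝ ((Fin d × Fin d) × Fin (d+1)) :=
  enc (fun f => lab x f)

def Ocen : EuclideanSpace ℝ ((Fin d × Fin d) × Fin (d+1)) :=
  ∑ y : Fin (d+1), lamf d y • pA d y

end PADef

section InnerO
variable {d : ℕ}

lemma inner_pA (x y : Fin (d+1)) : (inner ℝ (pA d x) (pA d y) : ℝ) = Sc x y := by
  unfold pA
  rw [enc_inner]
  rfl

set_option maxHeartbeats 1000000 in
lemma inner_O (hd : 3 ≤ d) (x : Fin (d+1)) :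
    (inner ℝ (Ocen d) (pA d x) : ℝ) = Gd d := by
  unfold Ocen
  rw [sum_inner]
  simp_rw [real_inner_smul_left, inner_pA]
  by_cases hx0 : x.val = 0
  · have hx : x = ⟨0, by omega⟩ := Fin.ext hx0
    rw [hx]
    have hpt : ∀ y : Fin (d+1), lamf d y * Sc y ⟨0, by omega⟩
        = nuv d * (2*(d:ℝ)-1)
          + (if y = (⟨0, by omega⟩ : Fin (d+1)) then lam0 d * (d:ℝ)^2 - nuv d * (2*(d:ℝ)-1) else 0)
          + (if y = (⟨1, by omega⟩ : Fin (d+1)) then muv d * (2*(d:ℝ)-2) - nuv d * (2*(d:ℝ)-1) else 0)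
          + (if y = (⟨2, by omega⟩ : Fin (d+1)) then muv d * (2*(d:ℝ)-2) - nuv d * (2*(d:ℝ)-1) else 0) := by
      intro y
      by_cases hy0 : y.val = 0
      · have hy : y = ⟨0, by omega⟩ := Fin.ext hy0
        rw [hy]
        rw [Sc_self]
        simp [lamf, Fin.ext_iff]
        try ring
      · by_cases hy1 : y.val = 1
        · have hy : y = ⟨1, by omega⟩ := Fin.ext hy1
          rw [hy]
          rw [Sc_comm, Sc_01 hd]
          simp [lamf, Fin.ext_iff]
          try ring
        · by_cases hy2 : y.val = 2
          · have hy : y = ⟨2, by omega⟩ := Fin.ext hy2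
            rw [hy]
            rw [Sc_comm, Sc_02 hd]
            simp [lamf, Fin.ext_iff]
            try ring
          · have hy3 : 3 ≤ y.val := by omega
            rw [Sc_comm, Sc_0v hd y hy3]
            have : lamf d y = nuv d := by simp [lamf, hy0, hy1, hy2]
            rw [this]
            rw [if_neg (show y ≠ ⟨0, by omega⟩ from fun h => hy0 (congrArg Fin.val h)), if_neg (show y ≠ ⟨1, by omega⟩ from fun h => hy1 (congrArg Fin.val h)),
              if_neg (show y ≠ ⟨2, by omega⟩ from fun h => hy2 (congrArg Fin.val h))]
            ring
    rw [Finset.sum_congr rfl (fun y _ => hpt y), Finset.sum_add_distrib,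
      Finset.sum_add_distrib, Finset.sum_add_distrib, sum_fin_card,
      spike_fin, spike_fin, spike_fin]
    push_cast
    linear_combination (G0_eq hd)
  · by_cases hx1 : x.val = 1
    · have hx : x = ⟨1, by omega⟩ := Fin.ext hx1
      rw [hx]
      have hpt : ∀ y : Fin (d+1), lamf d y * Sc y ⟨1, by omega⟩
          = nuv d * 2
            + (if y = (⟨0, by omega⟩ : Fin (d+1)) then lam0 d * (2*(d:ℝ)-2) - nuv d * 2 else 0)
            + (if y = (⟨1, by omega⟩ : Fin (d+1)) then muv d * (d:ℝ)^2 - nuv d * 2 else 0)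
            + (if y = (⟨2, by omega⟩ : Fin (d+1)) then - (nuv d * 2) else 0) := by
        intro y
        by_cases hy0 : y.val = 0
        · have hy : y = ⟨0, by omega⟩ := Fin.ext hy0
          rw [hy, Sc_01 hd]
          simp [lamf, Fin.ext_iff]
          try ring
        · by_cases hy1 : y.val = 1
          · have hy : y = ⟨1, by omega⟩ := Fin.ext hy1
            rw [hy, Sc_self]
            simp [lamf, Fin.ext_iff]
            try ring
          · by_cases hy2 : y.val = 2
            · have hy : y = ⟨2, by omega⟩ := Fin.ext hy2
              rw [hy, Sc_comm, Sc_12 hd]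
              simp [lamf, Fin.ext_iff]
              try ring
            · have hy3 : 3 ≤ y.val := by omega
              rw [Sc_comm, Sc_1v hd y hy3]
              have : lamf d y = nuv d := by simp [lamf, hy0, hy1, hy2]
              rw [this]
              rw [if_neg (show y ≠ ⟨0, by omega⟩ from fun h => hy0 (congrArg Fin.val h)), if_neg (show y ≠ ⟨1, by omega⟩ from fun h => hy1 (congrArg Fin.val h)),
                if_neg (show y ≠ ⟨2, by omega⟩ from fun h => hy2 (congrArg Fin.val h))]
              ring
      rw [Finset.sum_congr rfl (fun y _ => hpt y), Finset.sum_add_distrib,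
        Finset.sum_add_distrib, Finset.sum_add_distrib, sum_fin_card,
        spike_fin, spike_fin, spike_fin]
      unfold Gd
      push_cast
      ring
    · by_cases hx2 : x.val = 2
      · have hx : x = ⟨2, by omega⟩ := Fin.ext hx2
        rw [hx]
        have hpt : ∀ y : Fin (d+1), lamf d y * Sc y ⟨2, by omega⟩
            = nuv d * 2
              + (if y = (⟨0, by omega⟩ : Fin (d+1)) then lam0 d * (2*(d:ℝ)-2) - nuv d * 2 else 0)
              + (if y = (⟨1, by omega⟩ : Fin (d+1)) then - (nuv d * 2) else 0)
              + (if y = (⟨2, by omega⟩ : Fin (d+1)) then muv d * (d:ℝ)^2 - nuv d * 2 else 0) := by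
          intro y
          by_cases hy0 : y.val = 0
          · have hy : y = ⟨0, by omega⟩ := Fin.ext hy0
            rw [hy, Sc_02 hd]
            simp [lamf, Fin.ext_iff]
            try ring
          · by_cases hy1 : y.val = 1
            · have hy : y = ⟨1, by omega⟩ := Fin.ext hy1
              rw [hy, Sc_12 hd]
              simp [lamf, Fin.ext_iff]
              try ring
            · by_cases hy2 : y.val = 2
              · have hy : y = ⟨2, by omega⟩ := Fin.ext hy2
                rw [hy, Sc_self]
                simp [lamf, Fin.ext_iff]
                try ring
              · have hy3 : 3 ≤ y.val := by omega
                rw [Sc_comm, Sc_2v hd y hy3]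
                have : lamf d y = nuv d := by simp [lamf, hy0, hy1, hy2]
                rw [this]
                rw [if_neg (show y ≠ ⟨0, by omega⟩ from fun h => hy0 (congrArg Fin.val h)), if_neg (show y ≠ ⟨1, by omega⟩ from fun h => hy1 (congrArg Fin.val h)),
                  if_neg (show y ≠ ⟨2, by omega⟩ from fun h => hy2 (congrArg Fin.val h))]
                ring
        rw [Finset.sum_congr rfl (fun y _ => hpt y), Finset.sum_add_distrib,
          Finset.sum_add_distrib, Finset.sum_add_distrib, sum_fin_card,
          spike_fin, spike_fin, spike_fin]
        unfold Gd
        push_cast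
        ring
      · have hx3 : 3 ≤ x.val := by omega
        have hpt : ∀ y : Fin (d+1), lamf d y * Sc y x
            = nuv d * 2
              + (if y = (⟨0, by omega⟩ : Fin (d+1)) then lam0 d * (2*(d:ℝ)-1) - nuv d * 2 else 0)
              + (if y = (⟨1, by omega⟩ : Fin (d+1)) then muv d * 2 - nuv d * 2 else 0)
              + (if y = (⟨2, by omega⟩ : Fin (d+1)) then muv d * 2 - nuv d * 2 else 0)
              + (if y = x then nuv d * (d:ℝ)^2 - nuv d * 2 else 0) := by
          intro y
          by_cases hy0 : y.val = 0
          · have hy : y = ⟨0, by omega⟩ := Fin.ext hy0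
            rw [hy, Sc_0v hd x hx3]
            have hxx : ¬ ((0:ℕ) = x.val) := by omega
            simp [lamf, Fin.ext_iff, hxx]
            try ring
          · by_cases hy1 : y.val = 1
            · have hy : y = ⟨1, by omega⟩ := Fin.ext hy1
              rw [hy, Sc_1v hd x hx3]
              have hxx : ¬ ((1:ℕ) = x.val) := by omega
              simp [lamf, Fin.ext_iff, hxx]
              try ring
            · by_cases hy2 : y.val = 2
              · have hy : y = ⟨2, by omega⟩ := Fin.ext hy2
                rw [hy, Sc_2v hd x hx3]
                have hxx : ¬ ((2:ℕ) = x.val) := by omega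
                simp [lamf, Fin.ext_iff, hxx]
                try ring
              · have hy3 : 3 ≤ y.val := by omega
                have hlam : lamf d y = nuv d := by simp [lamf, hy0, hy1, hy2]
                by_cases hyx : y = x
                · rw [hyx] at hlam ⊢
                  rw [Sc_self, hlam]
                  rw [if_neg (show x ≠ ⟨0, by omega⟩ from fun h => hx0 (congrArg Fin.val h)), if_neg (show x ≠ ⟨1, by omega⟩ from fun h => hx1 (congrArg Fin.val h)),
                    if_neg (show x ≠ ⟨2, by omega⟩ from fun h => hx2 (congrArg Fin.val h)), if_pos rfl]
                  ring
                · rw [Sc_vv hd y x hy3 hx3 hyx, hlam]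
                  rw [if_neg (show y ≠ ⟨0, by omega⟩ from fun h => hy0 (congrArg Fin.val h)), if_neg (show y ≠ ⟨1, by omega⟩ from fun h => hy1 (congrArg Fin.val h)),
                    if_neg (show y ≠ ⟨2, by omega⟩ from fun h => hy2 (congrArg Fin.val h)), if_neg hyx]
                  ring
        rw [Finset.sum_congr rfl (fun y _ => hpt y), Finset.sum_add_distrib,
          Finset.sum_add_distrib, Finset.sum_add_distrib, Finset.sum_add_distrib, sum_fin_card,
          spike_fin, spike_fin, spike_fin, spike_fin]
        push_cast
        linear_combination (G3_eq hd)
end InnerO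
section Geom
variable {d : ℕ}

lemma sum_lamf (hd : 3 ≤ d) : ∑ y : Fin (d+1), lamf d y = 1 := by
  have hpt : ∀ y : Fin (d+1), lamf d y
      = nuv d
        + (if y = (⟨0, by omega⟩ : Fin (d+1)) then lam0 d - nuv d else 0)
        + (if y = (⟨1, by omega⟩ : Fin (d+1)) then muv d - nuv d else 0)
        + (if y = (⟨2, by omega⟩ : Fin (d+1)) then muv d - nuv d else 0) := by
    intro y
    by_cases hy0 : y.val = 0
    · have hy : y = ⟨0, by omega⟩ := Fin.ext hy0
      rw [hy]
      simp [lamf, Fin.ext_iff]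
    · by_cases hy1 : y.val = 1
      · have hy : y = ⟨1, by omega⟩ := Fin.ext hy1
        rw [hy]
        simp [lamf, Fin.ext_iff]
      · by_cases hy2 : y.val = 2
        · have hy : y = ⟨2, by omega⟩ := Fin.ext hy2
          rw [hy]
          simp [lamf, Fin.ext_iff]
        · simp [lamf, hy0, hy1, hy2, Fin.ext_iff]
          try omega
  rw [Finset.sum_congr rfl (fun y _ => hpt y), Finset.sum_add_distrib,
    Finset.sum_add_distrib, Finset.sum_add_distrib, sum_fin_card,
    spike_fin, spike_fin, spike_fin]
  push_cast
  linear_combination (sum_lam hd)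

lemma dist_O_pA (hd : 3 ≤ d) (x : Fin (d+1)) :
    dist (Ocen d) (pA d x) = Real.sqrt (‖Ocen d‖^2 - 2*Gd d + (d:ℝ)^2) := by
  rw [dist_eq_norm, ← Real.sqrt_sq (norm_nonneg (Ocen d - pA d x)), norm_sub_sq_real,
    inner_O hd]
  congr 2
  have : ‖pA d x‖^2 = (inner ℝ (pA d x) (pA d x) : ℝ) := (real_inner_self_eq_norm_sq _).symm
  rw [this, inner_pA, Sc_self]

lemma equidist_O (hd : 3 ≤ d) (i j : Fin (d+1)) :
    dist (Ocen d) (pA d i) = dist (Ocen d) (pA d j) := by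
  rw [dist_O_pA hd i, dist_O_pA hd j]

-- affine independence
lemma mem_diag {b : Fin d} {z : Fin (d+1)} :
    memv z.val (b, b) ↔ (z.val = 0 ∨ z.val = b.val + 1) := by
  unfold memv tg1 tg2
  by_cases h1 : b.val = 0 ∧ b.val = 1 <;> by_cases h2 : b.val = 1 ∧ b.val = 0 <;>
    simp [h1, h2] <;> omega

lemma lab_diag (hd : 3 ≤ d) {x : Fin (d+1)} (hx : x.val ≠ 0) {b : Fin d}
    (hb : b.val + 1 ≠ x.val) (y : Fin (d+1)) :
    lab y (b, b) = x ↔ y = x := by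
  unfold lab
  by_cases hm : memv y.val (b, b)
  · rw [if_pos hm]
    constructor
    · intro h
      exact absurd (congrArg Fin.val h).symm (by simpa using hx)
    · intro h
      subst h
      rw [_root_.mem_diag] at hm
      omega
  · rw [if_neg hm]

lemma affineIndep_pA (hd : 3 ≤ d) : AffineIndependent ℝ (pA d) := by
  rw [affineIndependent_iff_of_fintype]
  intro w hw hvs
  rw [Finset.weightedVSub_eq_linear_combination _ hw] at hvs
  have hkey : ∀ x : Fin (d+1), x.val ≠ 0 → w x = 0 := by
    intro x hx
    set b : Fin d := if x.val = 1 then ⟨1, by omega⟩ else ⟨0, by omega⟩ with hbdef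
    have hb : b.val + 1 ≠ x.val := by
      by_cases h : x.val = 1 <;> simp [hbdef, h] <;> omega
    have happ : (∑ i, w i • pA d i) ((b, b), x)
        = (0 : EuclideanSpace ℝ ((Fin d × Fin d) × Fin (d+1))) ((b, b), x) := by rw [hvs]
    rw [WithLp.ofLp_sum, Finset.sum_apply] at happ
    have heval : ∀ y : Fin (d+1), (w y • pA d y) ((b,b), x) = if y = x then w y else 0 := by
      intro y
      have : (pA d y) ((b,b), x) = if lab y (b,b) = x then (1:ℝ) else 0 := rfl
      rw [PiLp.smul_apply, this]
      by_cases h : y = x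
      · rw [if_pos ((lab_diag hd hx hb y).2 h), if_pos h]
        simp
      · rw [if_neg (fun hh => h ((lab_diag hd hx hb y).1 hh)), if_neg h]
        simp
    rw [Finset.sum_congr rfl (fun y _ => heval y),
      Finset.sum_ite_eq' Finset.univ x w] at happ
    simpa using happ
  intro x
  by_cases hx : x.val = 0
  · have := hw
    rw [Finset.sum_eq_single x] at this
    · exact this
    · intro y _ hy
      refine hkey y ?_
      intro hy0
      exact hy (Fin.ext (by omega))
    · intro h
      exact absurd (Finset.mem_univ _) h
  · exact hkey x hx

lemma O_not_hull (hd : 3 ≤ d) : Ocen d ∉ convexHull ℝ (Set.range (pA d)) := by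
  intro hmem
  set φ : EuclideanSpace ℝ ((Fin d × Fin d) × Fin (d+1)) → ℝ :=
    fun z => (inner ℝ (pA d ⟨0, by omega⟩) z : ℝ) with hφ
  have hlin : IsLinearMap ℝ φ := ⟨fun a b => inner_add_right _ _ _,
    fun c a => real_inner_smul_right _ _ _⟩
  have hconv : Convex ℝ {z | 2*(d:ℝ)-2 ≤ φ z} := convex_halfSpace_ge hlin _
  have hsub : Set.range (pA d) ⊆ {z | 2*(d:ℝ)-2 ≤ φ z} := by
    rintro _ ⟨x, rfl⟩
    have hval : φ (pA d x) = Sc (⟨0, by omega⟩ : Fin (d+1)) x := by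
      rw [hφ]; exact inner_pA _ x
    simp only [Set.mem_setOf_eq, hval]
    have hd3 := dR_ge hd
    by_cases hx0 : x.val = 0
    · have hxx : x = ⟨0, by omega⟩ := Fin.ext hx0
      rw [hxx, Sc_self]; nlinarith
    · by_cases hx1 : x.val = 1
      · have hxx : x = ⟨1, by omega⟩ := Fin.ext hx1
        rw [hxx, Sc_01 hd]
      · by_cases hx2 : x.val = 2
        · have hxx : x = ⟨2, by omega⟩ := Fin.ext hx2
          rw [hxx, Sc_02 hd]
        · rw [Sc_0v hd x (by omega)]; linarith
  have hO : φ (Ocen d) = Gd d := by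
    show (inner ℝ (pA d ⟨0, by omega⟩) (Ocen d) : ℝ) = Gd d
    rw [real_inner_comm]
    exact inner_O hd _
  have := convexHull_min hsub hconv hmem
  simp only [Set.mem_setOf_eq, hO] at this
  linarith [G_lt hd]

end Geom
section DistLemmas
variable {κ L : Type*} [Fintype κ] [Fintype L] [DecidableEq L]

lemma enc_dist_le (u v : κ → L) :
    dist (enc u) (enc v) ≤ Real.sqrt (2 * (Fintype.card κ : ℝ)) := by
  rw [enc_dist]
  apply Real.sqrt_le_sqrt
  calc ∑ f : κ, (if u f = v f then (0:ℝ) else 2)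
      ≤ ∑ _f : κ, (2:ℝ) := by
        refine Finset.sum_le_sum (fun f _ => ?_)
        by_cases h : u f = v f <;> simp [h]
    _ = 2 * (Fintype.card κ : ℝ) := by
        rw [Finset.sum_const, Finset.card_univ, nsmul_eq_mul]
        ring

lemma enc_dist_eq_of_ne (u v : κ → L) (h : ∀ f, u f ≠ v f) :
    dist (enc u) (enc v) = Real.sqrt (2 * (Fintype.card κ : ℝ)) := by
  rw [enc_dist]
  congr 1
  rw [Finset.sum_congr rfl (fun f _ => if_neg (h f)), Finset.sum_const, Finset.card_univ,
    nsmul_eq_mul]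
  ring

lemma enc_inj : Function.Injective (enc : (κ → L) → _) := by
  intro u v h
  funext f
  by_contra hne
  have h2 : enc u (f, u f) = enc v (f, u f) := by rw [h]
  have hl : enc u (f, u f) = (1:ℝ) := by simp [enc]
  have hr : enc v (f, u f) = (0:ℝ) := by
    have : ¬ (v f = u f) := fun hh => hne hh.symm
    simp [enc, this]
  rw [hl, hr] at h2
  norm_num at h2

end DistLemmas

lemma diam_eq_of {E : Type*} [PseudoMetricSpace E] {s : Set E} (hfin : s.Finite) {c : ℝ}
    (hc : 0 ≤ c) (hle : ∀ x ∈ s, ∀ y ∈ s, dist x y ≤ c)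
    (hex : ∃ x ∈ s, ∃ y ∈ s, dist x y = c) : Metric.diam s = c := by
  refine le_antisymm (Metric.diam_le_of_forall_dist_le hc hle) ?_
  obtain ⟨x, hx, y, hy, hxy⟩ := hex
  calc c = dist x y := hxy.symm
    _ ≤ Metric.diam s := Metric.dist_le_diam_of_mem hfin.isBounded hx hy

section Inj
variable {d : ℕ}

lemma lab_ne12 (hd : 3 ≤ d) (f : Fin d × Fin d) :
    lab (⟨1, by omega⟩ : Fin (d+1)) f ≠ lab (⟨2, by omega⟩ : Fin (d+1)) f := by
  obtain ⟨i, j⟩ := f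
  intro h
  have h12 : (⟨1, by omega⟩ : Fin (d+1)) ≠ ⟨2, by omega⟩ := by simp [Fin.ext_iff]
  have hmm := (lab_eq_iff h12 (i, j)).1 h
  have hmm2 : memv 1 (i, j) ∧ memv 2 (i, j) := hmm
  rw [mem1_iff i j, mem2_iff i j] at hmm2
  omega

lemma lab_inj (hd : 3 ≤ d) (x y : Fin (d+1)) (h : ∀ f : Fin d × Fin d, lab x f = lab y f) :
    x = y := by
  by_contra hxy
  have hv : x.val ≠ y.val := fun hh => hxy (Fin.ext hh)
  obtain ⟨b, hbx, hby⟩ : ∃ b : Fin d, b.val + 1 ≠ x.val ∧ b.val + 1 ≠ y.val := by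
    by_cases h1 : x.val ≠ 1 ∧ y.val ≠ 1
    · exact ⟨⟨0, by omega⟩, by simpa using fun hh => h1.1 hh.symm,
        by simpa using fun hh => h1.2 hh.symm⟩
    · by_cases h2 : x.val ≠ 2 ∧ y.val ≠ 2
      · exact ⟨⟨1, by omega⟩, by simpa using fun hh => h2.1 hh.symm,
          by simpa using fun hh => h2.2 hh.symm⟩
      · push_neg at h1 h2
        refine ⟨⟨2, by omega⟩, ?_, ?_⟩ <;> simp <;> omega
  have hlab := h (b, b)
  unfold lab at hlab
  by_cases hmx : memv x.val (b, b) <;> by_cases hmy : memv y.val (b, b)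
  · rw [_root_.mem_diag] at hmx hmy
    exact hxy (Fin.ext (by omega))
  · rw [if_pos hmx, if_neg hmy] at hlab
    apply hmy
    rw [_root_.mem_diag]
    left
    have : (0 : Fin (d+1)).val = y.val := congrArg Fin.val hlab
    simpa using this.symm
  · rw [if_neg hmx, if_pos hmy] at hlab
    apply hmx
    rw [_root_.mem_diag]
    left
    have : x.val = (0 : Fin (d+1)).val := congrArg Fin.val hlab
    simpa using this
  · rw [if_neg hmx, if_neg hmy] at hlab
    exact hxy hlab

end Inj
section Diam
variable {d : ℕ}

lemma card_cast : ((Fintype.card (Fin d × Fin d) : ℕ) : ℝ) = (d:ℝ) * (d:ℝ) := by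
  simp [Fintype.card_prod]

lemma diam_pA (hd : 3 ≤ d) :
    Metric.diam (Set.range (pA d)) = Real.sqrt (2 * ((d:ℝ) * (d:ℝ))) := by
  apply diam_eq_of (Set.finite_range _) (Real.sqrt_nonneg _)
  · rintro _ ⟨x, rfl⟩ _ ⟨y, rfl⟩
    have h := enc_dist_le (fun f : Fin d × Fin d => lab x f) (fun f => lab y f)
    rw [card_cast] at h
    exact h
  · refine ⟨pA d ⟨1, by omega⟩, ⟨_, rfl⟩, pA d ⟨2, by omega⟩, ⟨_, rfl⟩, ?_⟩
    have h := enc_dist_eq_of_ne (fun f : Fin d × Fin d => lab (⟨1, by omega⟩ : Fin (d+1)) f)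
      (fun f => lab (⟨2, by omega⟩ : Fin (d+1)) f) (lab_ne12 hd)
    rw [card_cast] at h
    exact h

lemma diam_words (hd : 3 ≤ d) {n : ℕ} (hn : 2 ≤ n) :
    Metric.diam (Set.range (fun τ : (Fin d × Fin d) → Fin n => enc τ))
      = Real.sqrt (2 * ((d:ℝ) * (d:ℝ))) := by
  apply diam_eq_of (Set.finite_range _) (Real.sqrt_nonneg _)
  · rintro _ ⟨τ, rfl⟩ _ ⟨ρ, rfl⟩
    have h := enc_dist_le τ ρ
    rw [card_cast] at h
    exact h
  · refine ⟨enc (fun _ => (⟨0, by omega⟩ : Fin n)), ⟨_, rfl⟩,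
      enc (fun _ => (⟨1, by omega⟩ : Fin n)), ⟨_, rfl⟩, ?_⟩
    have h := enc_dist_eq_of_ne (fun _ : Fin d × Fin d => (⟨0, by omega⟩ : Fin n))
      (fun _ => (⟨1, by omega⟩ : Fin n)) (fun f => by simp [Fin.ext_iff])
    rw [card_cast] at h
    exact h

end Diam

/-- for every `d ≥ 3` there is a diameter-Ramsey `d`-simplex whose
circumcenter (the point of the affine span equidistant from the vertices) lies
outside the convex hull. -/
theorem stmt14 (d : ℕ) (hd : 3 ≤ d) :
    ∃ (N : ℕ) (p : Fin (d + 1) → EuclideanSpace ℝ (Fin N)),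
      AffineIndependent ℝ p ∧
      IsDiamRamsey (Set.range p) ∧
      ∃ O : EuclideanSpace ℝ (Fin N),
        O ∈ affineSpan ℝ (Set.range p) ∧
        (∀ i j, dist O (p i) = dist O (p j)) ∧
        O ∉ convexHull ℝ (Set.range p) := by
  classical
  set eA : ((Fin d × Fin d) × Fin (d+1)) ≃ Fin (d*d*(d+1)) :=
    (finProdFinEquiv.prodCongr (Equiv.refl (Fin (d+1)))).trans finProdFinEquiv with heA
  set E1 := LinearIsometryEquiv.piLpCongrLeft 2 ℝ ℝ eA with hE1
  refine ⟨d*d*(d+1), fun x => E1 (pA d x), ?_, ?_, E1 (Ocen d), ?_, ?_, ?_⟩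
  · -- affine independence
    exact (affineIndep_pA hd).map' (E1.toLinearEquiv.toLinearMap.toAffineMap) E1.injective
  · -- diameter Ramsey
    intro q hq
    obtain ⟨n, hn2, hGR⟩ := grid_ramsey q (d+1) (d*d)
    set eR : ((Fin d × Fin d) × Fin n) ≃ Fin (d*d*n) :=
      (finProdFinEquiv.prodCongr (Equiv.refl (Fin n))).trans finProdFinEquiv with heR
    set E2 := LinearIsometryEquiv.piLpCongrLeft 2 ℝ ℝ eR with hE2
    refine ⟨d*d*n, Set.range (fun τ : (Fin d × Fin d) → Fin n => E2 (enc τ)), Set.finite_range _,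
      ?_, ?_⟩
    · -- diameters agree
      have h1 : Set.range (fun τ : (Fin d × Fin d) → Fin n => E2 (enc τ))
          = E2 '' (Set.range (fun τ : (Fin d × Fin d) → Fin n => enc τ)) := by
        rw [← Set.range_comp]; rfl
      have h2 : Set.range (fun x => E1 (pA d x)) = E1 '' (Set.range (pA d)) := by
        rw [← Set.range_comp]; rfl
      rw [h1, h2, E2.isometry.diam_image, E1.isometry.diam_image, diam_words hd hn2,
        diam_pA hd]
    · intro χ
      set ψ : (Fin (d*d) → Fin n) → Fin q :=
        fun τ => χ (E2 (enc (fun f => τ (finProdFinEquiv f)))) with hψ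
      obtain ⟨g, c, hg⟩ := hGR ψ
      set σ : Fin (d+1) → (Fin d × Fin d) → Fin n :=
        fun x f => g (finProdFinEquiv f) (lab x f) with hσ
      set hmap : Fin (d+1) → EuclideanSpace ℝ (Fin (d*d*n)) :=
        fun x => E2 (enc (σ x)) with hhmap
      have hinj : Function.Injective hmap := by
        intro x y hxy
        apply lab_inj hd x y
        intro f
        have h1 : enc (σ x) = enc (σ y) := E2.injective hxy
        have h2 : σ x = σ y := enc_inj h1
        have h3 : σ x f = σ y f := congrFun h2 f
        exact (g (finProdFinEquiv f)).injective h3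
      have hcolor : ∀ x : Fin (d+1), χ (hmap x) = c := by
        intro x
        have h1 := hg (fun i => lab x (finProdFinEquiv.symm i))
        have h2 : (fun f : Fin d × Fin d =>
            g (finProdFinEquiv f) (lab x (finProdFinEquiv.symm (finProdFinEquiv f)))) = σ x := by
          funext f
          rw [Equiv.symm_apply_apply]
        rw [hψ] at h1
        simp only [] at h1
        rw [h2] at h1
        exact h1
      refine ⟨Set.range hmap, ?_, ?_, ?_⟩
      · rintro _ ⟨x, rfl⟩; exact ⟨σ x, rfl⟩
      · rintro _ ⟨x, rfl⟩ _ ⟨y, rfl⟩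
        rw [hcolor x, hcolor y]
      · refine ⟨fun z => if hz : ∃ x, hmap x = z then E1 (pA d hz.choose)
          else E1 (pA d ⟨0, by omega⟩), ?_, ?_⟩
        · have hfh : ∀ x, (fun z => if hz : ∃ x, hmap x = z then E1 (pA d hz.choose)
              else E1 (pA d ⟨0, by omega⟩)) (hmap x) = E1 (pA d x) := by
            intro x
            have hex : ∃ x', hmap x' = hmap x := ⟨x, rfl⟩
            simp only [dif_pos hex]
            rw [hinj hex.choose_spec]
          rw [← Set.range_comp]
          have : ((fun z => if hz : ∃ x, hmap x = z then E1 (pA d hz.choose)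
              else E1 (pA d ⟨0, by omega⟩)) ∘ hmap) = fun x => E1 (pA d x) := funext hfh
          rw [this]
        · have hfh : ∀ x, (fun z => if hz : ∃ x, hmap x = z then E1 (pA d hz.choose)
              else E1 (pA d ⟨0, by omega⟩)) (hmap x) = E1 (pA d x) := by
            intro x
            have hex : ∃ x', hmap x' = hmap x := ⟨x, rfl⟩
            simp only [dif_pos hex]
            rw [hinj hex.choose_spec]
          rintro _ ⟨x, rfl⟩ _ ⟨y, rfl⟩
          rw [hfh x, hfh y, E1.dist_map]
          show dist (pA d x) (pA d y) = dist (E2 (enc (σ x))) (E2 (enc (σ y)))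
          rw [E2.dist_map]
          show dist (enc (fun f => lab x f)) (enc (fun f => lab y f))
            = dist (enc (σ x)) (enc (σ y))
          rw [enc_dist, enc_dist]
          congr 1
          refine Finset.sum_congr rfl (fun f _ => ?_)
          refine if_congr ?_ rfl rfl
          exact (Iff.symm (g (finProdFinEquiv f)).injective.eq_iff)
  · -- O in affine span
    have hO : E1 (Ocen d)
        = Finset.univ.affineCombination ℝ (fun x => E1 (pA d x)) (lamf d) := by
      rw [Finset.affineCombination_eq_linear_combination _ _ _ (sum_lamf hd)]
      show E1 (∑ y : Fin (d+1), lamf d y • pA d y) = _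
      rw [map_sum]
      refine Finset.sum_congr rfl (fun y _ => ?_)
      rw [map_smul]
    rw [hO]
    exact affineCombination_mem_affineSpan (sum_lamf hd) _
  · intro i j
    rw [E1.dist_map, E1.dist_map]
    exact equidist_O hd i j
  · -- not in convex hull
    intro hc
    have h2 : Set.range (fun x => E1 (pA d x)) = E1 '' (Set.range (pA d)) := by
      rw [← Set.range_comp]; rfl
    rw [h2] at hc
    have h3 : convexHull ℝ (⇑E1 '' Set.range (pA d))
        = ⇑E1 '' (convexHull ℝ (Set.range (pA d))) := by
      have := (E1.toLinearEquiv.toLinearMap.toAffineMap).image_convexHull (Set.range (pA d))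
      convert this.symm using 2
      all_goals rfl
    rw [h3] at hc
    obtain ⟨z, hz, hze⟩ := hc
    rw [E1.injective hze] at hz
    exact O_not_hull hd hz
end

section
/- If s, t, u > 0 satisfy (d−2)tu > s(s+t+u) for some integer d ≥ 3, then the circumcenter of the d-simplex A_d(s,t,u) (with squared edges ‖p_1−p_2‖² = ‖p_1−p_j‖² = s+t+u for 4 ≤ j ≤ d+1, ‖p_1−p_3‖² = s+u, ‖p_i−p_j‖² = s+t for 2 ≤ i < j ≤ d+1) lies outside the convex hull of its vertices. -/
/-!
Suppose the circumcenter `O` lies in the convex hull, say `O = ∑ wᵢ pᵢ` with `wᵢ ≥ 0`,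
`∑ wᵢ = 1`. Then `|O - p_k|² = ∑ᵢ wᵢ |pᵢ - p_k|² - ½ ∑ᵢⱼ wᵢ wⱼ |pᵢ - pⱼ|²`, so
equidistance of `O` from the vertices says that `E_k = ∑ᵢ wᵢ |pᵢ - p_k|²` does not depend on `k`.
For `A_d(s,t,u)` this forces all weights other than those of `p₁` and `p₃` to be equal, and
solving the remaining linear equations shows that the weight of `p₃` is a positive multiple of
`s(s+t+u) - (d-2)tu < 0`, a contradiction.
-/

open Finset

theorem exists_nonneg_affineCombination_of_mem_convexHull {R E ι : Type*} [Field R]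
    [LinearOrder R] [IsStrictOrderedRing R] [AddCommGroup E] [Module R E] [Fintype ι]
    {v : ι → E} {x : E} (hx : x ∈ convexHull R (Set.range v)) :
    ∃ w : ι → R, (∀ i, 0 ≤ w i) ∧ ∑ i, w i = 1 ∧ univ.affineCombination R v w = x := by
  classical
  rw [convexHull_range_eq_exists_affineCombination] at hx
  obtain ⟨s, w, hw₀, hw₁, rfl⟩ := hx
  refine ⟨Set.indicator s w, fun i => ?_, ?_, ?_⟩
  · by_cases hi : i ∈ s <;> simp [hi, hw₀]
  · rw [← hw₁, sum_indicator_subset w s.subset_univ]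
  · rw [affineCombination_indicator_subset w v s.subset_univ]

theorem dist_affineCombination_sq {ι V P : Type*} [Fintype ι] [NormedAddCommGroup V]
    [InnerProductSpace ℝ V] [MetricSpace P] [NormedAddTorsor V P]
    (p : ι → P) {w : ι → ℝ} (hw : ∑ i, w i = 1) (k : ι) :
    dist (univ.affineCombination ℝ p w) (p k) ^ 2 =
      ∑ i, w i * dist (p i) (p k) ^ 2 - (∑ i, ∑ j, w i * w j * dist (p i) (p j) ^ 2) / 2 := by
  classical
  have hk : ∑ i, (Pi.single k 1 : ι → ℝ) i = 1 := by simp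
  have h := EuclideanGeometry.dist_affineCombination p hw hk
  simp only [univ.affineCombination_piSingle ℝ p (mem_univ k), Pi.sub_apply, sub_mul, mul_sub,
    sum_sub_distrib, Pi.single_apply] at h
  simp only [pow_two, h, ite_mul, one_mul, zero_mul, sum_ite_irrel, sum_const_zero, sum_ite_eq',
    mem_univ, ↓reduceIte, dist_comm (p k), mul_ite, mul_one, mul_zero, dist_self, sub_zero,
    neg_sub]
  ring

theorem sum_mul_dist_sq_eq_of_dist_eq {ι V P : Type*} [Fintype ι] [NormedAddCommGroup V]
    [InnerProductSpace ℝ V] [MetricSpace P] [NormedAddTorsor V P]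
    (p : ι → P) {w : ι → ℝ} (hw : ∑ i, w i = 1) {k l : ι}
    (h : dist (univ.affineCombination ℝ p w) (p k) = dist (univ.affineCombination ℝ p w) (p l)) :
    ∑ i, w i * dist (p i) (p k) ^ 2 = ∑ i, w i * dist (p i) (p l) ^ 2 := by
  have hk := dist_affineCombination_sq p hw k
  rw [h, dist_affineCombination_sq p hw l] at hk
  linarith

section pair

variable {ι : Type*} [Fintype ι] [DecidableEq ι] {j k : ι}

theorem sum_eq_add_add_sum_compl_pair {M : Type*} [AddCommMonoid M] (f : ι → M) (hjk : j ≠ k) :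
    ∑ i, f i = f j + f k + ∑ i ∈ {j, k}ᶜ, f i := by
  rw [← sum_pair hjk, add_comm, sum_compl_add_sum]

theorem sum_mul_eq_of_eq_off_pair {w f : ι → ℝ} (hw : ∑ i, w i = 1) (hjk : j ≠ k) (hk : f k = 0)
    {y : ℝ} (hf : ∀ i, i ≠ j → i ≠ k → f i = y) :
    ∑ i, w i * f i = w j * f j + y * (1 - w j - w k) := by
  have hcompl : ∑ i ∈ {j, k}ᶜ, w i * f i = y * ∑ i ∈ {j, k}ᶜ, w i := by
    rw [mul_sum]
    refine sum_congr rfl fun i hi => ?_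
    simp only [mem_compl, mem_insert, mem_singleton, not_or] at hi
    rw [hf i hi.1 hi.2, mul_comm]
  rw [sum_eq_add_add_sum_compl_pair w hjk] at hw
  rw [sum_eq_add_add_sum_compl_pair _ hjk, hk, hcompl]
  linear_combination y * hw

theorem add_add_card_sub_two_mul_eq_one {w : ι → ℝ} (hw : ∑ i, w i = 1) (hjk : j ≠ k) {b : ℝ}
    (hb : ∀ i, i ≠ j → i ≠ k → w i = b) :
    w j + w k + ((Fintype.card ι : ℝ) - 2) * b = 1 := by
  have hcard : (({j, k} : Finset ι)ᶜ.card : ℝ) = Fintype.card ι - 2 := by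
    rw [card_compl, card_pair hjk, Nat.cast_sub (card_pair hjk ▸ card_le_univ _), Nat.cast_ofNat]
  have hcompl : ∑ i ∈ {j, k}ᶜ, w i = ((Fintype.card ι : ℝ) - 2) * b := by
    rw [sum_congr rfl fun i hi => hb i (by simp_all) (by simp_all), sum_const, nsmul_eq_mul, hcard]
  rw [← hw, sum_eq_add_add_sum_compl_pair w hjk, hcompl]

end pair

section simplex

variable {P : Type*} [MetricSpace P] {d : ℕ} {p : Fin (d + 1) → P} {s t u : ℝ}

theorem dist_sq_eq_of_ne_zero
    (hij : ∀ i j : Fin (d + 1), 1 ≤ (i : ℕ) → i < j → dist (p i) (p j) ^ 2 = s + t)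
    {i k : Fin (d + 1)} (hi0 : i ≠ 0) (hk0 : k ≠ 0) (hik : i ≠ k) :
    dist (p i) (p k) ^ 2 = s + t := by
  have hi := Fin.val_ne_zero_iff.mpr hi0
  have hk := Fin.val_ne_zero_iff.mpr hk0
  rcases hik.lt_or_gt with h | h
  · exact hij i k (by omega) h
  · rw [dist_comm]
    exact hij k i (by omega) h

theorem dist_sq_zero_eq_of_ne_two (hd : 2 ≤ d) (h12 : dist (p 0) (p 1) ^ 2 = s + t + u)
    (h1j : ∀ j : Fin (d + 1), 3 ≤ (j : ℕ) → dist (p 0) (p j) ^ 2 = s + t + u)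
    {i : Fin (d + 1)} (hi2 : i ≠ 2) (hi0 : i ≠ 0) :
    dist (p i) (p 0) ^ 2 = s + t + u := by
  rw [dist_comm]
  by_cases hi1 : i = 1
  · rw [hi1, h12]
  · have v1 : ((1 : Fin (d + 1)) : ℕ) = 1 := by simp; omega
    have v2 : ((2 : Fin (d + 1)) : ℕ) = 2 := by simp; omega
    have := Fin.val_ne_zero_iff.mpr hi0
    have := Fin.val_ne_iff.mpr hi1
    have := Fin.val_ne_iff.mpr hi2
    exact h1j i (by omega)

end simplex

/-- `a`, `c` and `b` are the weights of `p₁`, of `p₃` and of each other vertex of `A_n(s,t,u)`;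
`h02` and `h01` say that the weighted sums of squared distances to `p₁`, `p₃` and `p₂` agree. -/
theorem third_vertex_weight_neg {n s t u a b c : ℝ} (hn : 3 ≤ n) (hs : 0 < s) (ht : 0 < t)
    (hu : 0 < u) (hcond : s * (s + t + u) < (n - 2) * t * u) (hsum : a + c + (n - 1) * b = 1)
    (h02 : c * (s + u) + (s + t + u) * (1 - c - a) = a * (s + u) + (s + t) * (1 - a - c))
    (h01 : c * (s + u) + (s + t + u) * (1 - c - a) = a * (s + t + u) + (s + t) * (1 - a - b)) :
    c < 0 := by
  have hD :
      0 < ((n - 1) * (s + t + 2 * u) + (s + t)) * s + ((n - 1) * t + s + t) * (s + 2 * u) := by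
    have : 0 < n - 1 := by linarith
    positivity
  have key : c * (((n - 1) * (s + t + 2 * u) + (s + t)) * s + ((n - 1) * t + s + t) * (s + 2 * u))
      = s * (s + t + u) - (n - 2) * t * u := by
    linear_combination ((n - 1) * (s + t + 2 * u) + (s + t)) * h02
      - (s + 2 * u) * (n - 1) * h01 + (s + 2 * u) * (s + t) * hsum
  exact neg_of_mul_neg_right (by linarith) hD.le

theorem stmt19_general (d : ℕ) (hd : 3 ≤ d) (s t u : ℝ) (hs : 0 < s) (ht : 0 < t) (hu : 0 < u)
    (hcond : s * (s + t + u) < ((d : ℝ) - 2) * t * u)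
    {N : ℕ} (p : Fin (d + 1) → EuclideanSpace ℝ (Fin N))
    (h12 : dist (p 0) (p 1) ^ 2 = s + t + u)
    (h1j : ∀ j : Fin (d + 1), 3 ≤ (j : ℕ) → dist (p 0) (p j) ^ 2 = s + t + u)
    (h13 : dist (p 0) (p 2) ^ 2 = s + u)
    (hij : ∀ i j : Fin (d + 1), 1 ≤ (i : ℕ) → i < j → dist (p i) (p j) ^ 2 = s + t)
    (O : EuclideanSpace ℝ (Fin N))
    (hOdist : ∀ i j, dist O (p i) = dist O (p j)) :
    O ∉ convexHull ℝ (Set.range p) := by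
  intro hO
  obtain ⟨w, hw₀, hw₁, rfl⟩ := exists_nonneg_affineCombination_of_mem_convexHull hO
  have hE := fun k l => sum_mul_dist_sq_eq_of_dist_eq p hw₁ (hOdist k l)
  have v1 : ((1 : Fin (d + 1)) : ℕ) = 1 := by simp; omega
  have v2 : ((2 : Fin (d + 1)) : ℕ) = 2 := by simp; omega
  have h01 : (0 : Fin (d + 1)) ≠ 1 := Fin.ne_of_val_ne (by rw [Fin.val_zero, v1]; omega)
  have h02 : (0 : Fin (d + 1)) ≠ 2 := Fin.ne_of_val_ne (by rw [Fin.val_zero, v2]; omega)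
  have h12' : (1 : Fin (d + 1)) ≠ 2 := Fin.ne_of_val_ne (by rw [v1, v2]; omega)
  have hdist0 := fun i => dist_sq_zero_eq_of_ne_two (i := i) (by omega) h12 h1j
  have hE0 : ∑ i, w i * dist (p i) (p 0) ^ 2 = w 2 * (s + u) + (s + t + u) * (1 - w 2 - w 0) := by
    rw [sum_mul_eq_of_eq_off_pair hw₁ h02.symm (by simp) hdist0, dist_comm, h13]
  have hE2 : ∑ i, w i * dist (p i) (p 2) ^ 2 = w 0 * (s + u) + (s + t) * (1 - w 0 - w 2) := by
    rw [sum_mul_eq_of_eq_off_pair hw₁ h02 (by simp)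
      fun i hi0 hi2 => dist_sq_eq_of_ne_zero hij hi0 h02.symm hi2, h13]
  have hEk : ∀ k, k ≠ 0 → k ≠ 2 →
      ∑ i, w i * dist (p i) (p k) ^ 2 = w 0 * (s + t + u) + (s + t) * (1 - w 0 - w k) := by
    intro k hk0 hk2
    rw [sum_mul_eq_of_eq_off_pair hw₁ (Ne.symm hk0) (by simp)
      fun i hi0 hik => dist_sq_eq_of_ne_zero hij hi0 hk0 hik, dist_comm, hdist0 k hk2 hk0]
  have hw : ∀ k, k ≠ 0 → k ≠ 2 → w k = w 1 := fun k hk0 hk2 => by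
    have h := (hEk k hk0 hk2).symm.trans ((hE k 1).trans (hEk 1 h01.symm h12'))
    exact mul_left_cancel₀ (by positivity : s + t ≠ 0) (by linarith)
  have hsum := add_add_card_sub_two_mul_eq_one hw₁ h02 hw
  rw [Fintype.card_fin, Nat.cast_add, Nat.cast_one, add_sub_assoc] at hsum
  refine (hw₀ 2).not_gt (third_vertex_weight_neg (by exact_mod_cast hd) hs ht hu hcond ?_
    (hE0.symm.trans ((hE 0 2).trans hE2)) (hE0.symm.trans ((hE 0 1).trans (hEk 1 h01.symm h12'))))
  linear_combination hsum

/-- if `(d−2)tu > s(s+t+u)`, then the circumcenter of any realization of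
`A_d(s,t,u)` lies outside the convex hull of its vertices. Vertex `0` is `p₁`,
vertex `1` is `p₂`, vertex `2` is `p₃`. -/
theorem stmt19 (d : ℕ) (hd : 3 ≤ d) (s t u : ℝ) (hs : 0 < s) (ht : 0 < t) (hu : 0 < u)
    (hcond : s * (s + t + u) < ((d : ℝ) - 2) * t * u)
    {N : ℕ} (p : Fin (d + 1) → EuclideanSpace ℝ (Fin N))
    (hind : AffineIndependent ℝ p)
    (h12 : dist (p 0) (p 1) ^ 2 = s + t + u)
    (h1j : ∀ j : Fin (d + 1), 3 ≤ (j : ℕ) → dist (p 0) (p j) ^ 2 = s + t + u)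
    (h13 : dist (p 0) (p 2) ^ 2 = s + u)
    (hij : ∀ i j : Fin (d + 1), 1 ≤ (i : ℕ) → i < j → dist (p i) (p j) ^ 2 = s + t)
    (O : EuclideanSpace ℝ (Fin N))
    (hOspan : O ∈ affineSpan ℝ (Set.range p))
    (hOdist : ∀ i j, dist O (p i) = dist O (p j)) :
    O ∉ convexHull ℝ (Set.range p) :=
  stmt19_general d hd s t u hs ht hu hcond p h12 h1j h13 hij O hOdist
end
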